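/- arXiv:2110.00401 — 9 statements merged into one kernel-verified Lean document; each statement's English description precedes it below -/
import Mathlib

section
/- Let (β_n)_{n≥0} and (γ_n)_{n≥0} be arbitrary sequences of complex numbers and define polynomials by P_{−1}(x) = 0, P_0(x) = 1, and P_{n+1}(x) = (x − β_n) P_n(x) − γ_n P_{n−1}(x) for n ≥ 0. Then there exists a unique ℂ-linear functional u on ℂ[x] such that ⟨u, 1⟩ = γ_0 and ⟨u, P_n P_m⟩ = 0 whenever n ≠ m. -/
open Polynomial

/-- Favard, existence and uniqueness part: given arbitrary sequences
`(β n)`, `(γ n)` in ℂ and the polynomials defined by the three-term recurrence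
`P₋₁ = 0`, `P₀ = 1`, `P_{n+1} = (x − β_n) P_n − γ_n P_{n−1}`, there exists a unique
linear functional `u` on `ℂ[X]` with `⟨u, 1⟩ = γ₀` and `⟨u, P_n P_m⟩ = 0` for `n ≠ m`. -/
theorem stmt3 (β γ : ℕ → ℂ) (P : ℕ → ℂ[X])
    (hP0 : P 0 = 1) (hP1 : P 1 = X - C (β 0))
    (hPrec : ∀ n : ℕ, P (n + 2) = (X - C (β (n + 1))) * P (n + 1) - C (γ (n + 1)) * P n) :
    ∃! u : ℂ[X] →ₗ[ℂ] ℂ, u 1 = γ 0 ∧ ∀ n m : ℕ, n ≠ m → u (P n * P m) = 0 := by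
  -- each `P n` is monic of degree `n`
  have hmd : ∀ n, (P n).Monic ∧ (P n).natDegree = n := by
    intro n
    induction n using Nat.strong_induction_on with
    | _ n ih =>
      match n with
      | 0 => rw [hP0]; exact ⟨monic_one, natDegree_one⟩
      | 1 => rw [hP1]; exact ⟨monic_X_sub_C _, by rw [natDegree_X_sub_C]⟩
      | (m+2) =>
        obtain ⟨hm1, hd1⟩ := ih (m+1) (by omega)
        obtain ⟨hm0, hd0⟩ := ih m (by omega)
        have hmon : ((X - C (β (m+1))) * P (m+1)).Monic := (monic_X_sub_C _).mul hm1
        have hdeg : ((X - C (β (m+1))) * P (m+1)).natDegree = m + 2 := by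
          rw [natDegree_mul (monic_X_sub_C _).ne_zero hm1.ne_zero, natDegree_X_sub_C, hd1]
          omega
        have hlt : (C (γ (m+1)) * P m).degree < ((X - C (β (m+1))) * P (m+1)).degree := by
          apply degree_lt_degree
          rw [hdeg]
          refine lt_of_le_of_lt (natDegree_mul_le.trans ?_) (by omega : m < m + 2)
          simp [hd0]
        rw [hPrec m]
        refine ⟨hmon.sub_of_left hlt, ?_⟩
        rw [natDegree_eq_of_degree_eq (degree_sub_eq_left_of_degree_lt hlt), hdeg]
  have hmonic : ∀ n, (P n).Monic := fun n => (hmd n).1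
  have hnd : ∀ n, (P n).natDegree = n := fun n => (hmd n).2
  -- the `P n` span
  have hspan : ∀ q : ℂ[X], q ∈ Submodule.span ℂ (Set.range P) := by
    have key : ∀ N, ∀ q : ℂ[X], q.natDegree ≤ N → q ∈ Submodule.span ℂ (Set.range P) := by
      intro N
      induction N with
      | zero =>
        intro q hq
        rw [Polynomial.eq_C_of_natDegree_le_zero hq]
        have : (C (q.coeff 0) : ℂ[X]) = q.coeff 0 • P 0 := by
          rw [hP0, smul_eq_C_mul, mul_one]
        rw [this]
        exact Submodule.smul_mem _ _ (Submodule.subset_span ⟨0, rfl⟩)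
      | succ N ihN =>
        intro q hq
        by_cases h : q.natDegree ≤ N
        · exact ihN q h
        · have hqd : q.natDegree = N + 1 := by omega
          have hq0 : q ≠ 0 := by
            intro h0; rw [h0, natDegree_zero] at hqd; omega
          set c := q.leadingCoeff with hc
          have hc0 : c ≠ 0 := leadingCoeff_ne_zero.mpr hq0
          have hdegeq : q.degree = (c • P (N+1)).degree := by
            rw [smul_eq_C_mul, degree_C_mul hc0, degree_eq_natDegree (hmonic (N+1)).ne_zero,
              hnd, degree_eq_natDegree hq0, hqd]
          have hlc : q.leadingCoeff = (c • P (N+1)).leadingCoeff := by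
            rw [smul_eq_C_mul, leadingCoeff_mul, leadingCoeff_C,
              (hmonic (N+1)).leadingCoeff, mul_one]
          have hsub : (q - c • P (N+1)).degree < q.degree :=
            degree_sub_lt hdegeq hq0 hlc
          have hsub' : (q - c • P (N+1)).natDegree ≤ N := by
            have := hsub
            rw [degree_eq_natDegree hq0, hqd] at this
            exact natDegree_le_iff_degree_le.mpr (by
              exact_mod_cast Order.le_of_lt_succ (by exact_mod_cast this))
          have hmem := ihN _ hsub'
          have : q = (q - c • P (N+1)) + c • P (N+1) := by ring
          rw [this]
          exact Submodule.add_mem _ hmem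
            (Submodule.smul_mem _ _ (Submodule.subset_span ⟨N+1, rfl⟩))
    intro q; exact key q.natDegree q le_rfl
  -- the `P n` are linearly independent
  have claim : ∀ s : Finset ℕ, ∀ g : ℕ → ℂ, ∑ i ∈ s, g i • P i = 0 → ∀ i ∈ s, g i = 0 := by
    intro s
    induction s using Finset.strongInductionOn with
    | _ s ih =>
      intro g hsum i hi
      have hne : s.Nonempty := ⟨i, hi⟩
      set n := s.max' hne with hn
      have hgn : g n = 0 := by
        have h0 := congrArg (fun p => Polynomial.coeff p n) hsum
        simp only [finset_sum_coeff, coeff_smul, coeff_zero, smul_eq_mul] at h0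
        rw [Finset.sum_eq_single n] at h0
        · rw [show (P n).coeff n = 1 by
            have := (hmonic n).coeff_natDegree; rwa [hnd] at this, mul_one] at h0
          exact h0
        · intro j hj hjn
          have hjlt : j < n := lt_of_le_of_ne (s.le_max' j hj) hjn
          rw [coeff_eq_zero_of_natDegree_lt (by rw [hnd]; exact hjlt), mul_zero]
        · intro h; exact absurd (s.max'_mem hne) h
      have hsum' : ∑ j ∈ s.erase n, g j • P j = 0 := by
        have h2 := Finset.add_sum_erase s (fun j => g j • P j) (s.max'_mem hne)
        rw [← h2] at hsum
        simpa [← hn, hgn] using hsum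
      rcases eq_or_ne i n with rfl | hne2
      · exact hgn
      · exact ih (s.erase n) (Finset.erase_ssubset (s.max'_mem hne)) g hsum' i
          (Finset.mem_erase.2 ⟨hne2, hi⟩)
  have hli : LinearIndependent ℂ P := linearIndependent_iff'.2
    (fun s g h i hi => claim s g h i hi)
  -- the basis
  let b : Module.Basis ℕ ℂ ℂ[X] := Module.Basis.mk hli (fun x _ => hspan x)
  have hb : ∀ n, b n = P n := fun n => Module.Basis.mk_apply hli _ n
  -- the functional
  let u : ℂ[X] →ₗ[ℂ] ℂ := γ 0 • (b.coord 0)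
  have hu : ∀ n, u (P n) = if n = 0 then γ 0 else 0 := by
    intro n
    have : u (P n) = γ 0 • (b.repr (P n) 0) := rfl
    rw [this, ← hb n, Module.Basis.repr_self, Finsupp.single_apply]
    by_cases h : n = 0 <;> simp [h]
  have hu1 : u 1 = γ 0 := by rw [← hP0, hu 0]; simp
  -- key orthogonality `u (X^k * P n) = 0` for `k < n`
  have hX : ∀ k, ∀ n, k < n → u (X ^ k * P n) = 0 := by
    intro k
    induction k with
    | zero =>
      intro n hn
      rw [pow_zero, one_mul, hu n, if_neg (by omega)]
    | succ k ih =>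
      intro n hn
      obtain ⟨j, rfl⟩ : ∃ j, n = j + 2 := ⟨n - 2, by omega⟩
      have hx : (X : ℂ[X]) * P (j+2) =
          P (j+3) + C (β (j+2)) * P (j+2) + C (γ (j+2)) * P (j+1) := by
        rw [show j + 3 = (j+1) + 2 from rfl, hPrec (j+1)]; ring
      have hexp : X ^ (k+1) * P (j+2) =
          X ^ k * P (j+3) + β (j+2) • (X ^ k * P (j+2)) + γ (j+2) • (X ^ k * P (j+1)) := by
        rw [smul_eq_C_mul, smul_eq_C_mul, pow_succ, mul_assoc, hx]; ring
      rw [hexp, map_add, map_add, map_smul, map_smul,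
        ih (j+3) (by omega), ih (j+2) (by omega), ih (j+1) (by omega)]
      simp
  -- orthogonality for products
  have hmul : ∀ m n, m < n → u (P m * P n) = 0 := by
    intro m n h
    have hrep : P m * P n = ∑ k ∈ Finset.range (m+1), ((P m).coeff k) • (X ^ k * P n) := by
      conv_lhs => rw [Polynomial.as_sum_range' (P m) (m+1) (by rw [hnd]; omega)]
      rw [Finset.sum_mul]
      refine Finset.sum_congr rfl fun k _ => ?_
      rw [smul_eq_C_mul, ← C_mul_X_pow_eq_monomial, mul_assoc]
    rw [hrep, map_sum]
    exact Finset.sum_eq_zero fun k hk => by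
      rw [map_smul, hX k n (by have := Finset.mem_range.1 hk; omega), smul_zero]
  refine ⟨u, ⟨hu1, ?_⟩, ?_⟩
  · intro n m hnm
    rcases lt_or_gt_of_ne hnm with h | h
    · exact hmul n m h
    · rw [mul_comm]; exact hmul m n h
  · intro v ⟨hv1, hv2⟩
    apply b.ext
    intro n
    rw [hb n]
    cases n with
    | zero => rw [hP0, hv1, hu1]
    | succ k =>
      have h1 : v (P (k+1)) = 0 := by
        have := hv2 0 (k+1) (by omega)
        rwa [hP0, one_mul] at this
      rw [h1, hu (k+1), if_neg (by omega)]
end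

section
/- Let (β_n)_{n≥0} and (γ_n)_{n≥0} be sequences of complex numbers, define P_{−1}(x) = 0, P_0(x) = 1, P_{n+1}(x) = (x − β_n) P_n(x) − γ_n P_{n−1}(x), and let u be the unique functional with ⟨u,1⟩ = γ_0 and ⟨u, P_nP_m⟩ = 0 for n ≠ m. Then u is regular with (P_n)_{n≥0} as its monic orthogonal polynomial sequence if and only if γ_n ≠ 0 for every n ≥ 0. -/
open Polynomial

/-- Favard, regularity part: with `(P n)` defined by the three-term recurrence
`P₋₁ = 0`, `P₀ = 1`, `P_{n+1} = (x − β_n)P_n − γ_n P_{n−1}` and `u` the functional with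
`⟨u,1⟩ = γ₀` and `⟨u, P_n P_m⟩ = 0` for `n ≠ m`, the functional `u` is regular with `(P n)`
as its monic OPS if and only if `γ_n ≠ 0` for every `n`. -/
theorem stmt4 (β γ : ℕ → ℂ) (P : ℕ → ℂ[X])
    (hP0 : P 0 = 1) (hP1 : P 1 = X - C (β 0))
    (hPrec : ∀ n : ℕ, P (n + 2) = (X - C (β (n + 1))) * P (n + 1) - C (γ (n + 1)) * P n)
    (u : ℂ[X] →ₗ[ℂ] ℂ) (hu1 : u 1 = γ 0)
    (huorth : ∀ n m : ℕ, n ≠ m → u (P n * P m) = 0) :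
    ((∀ n, (P n).Monic) ∧ (∀ n, (P n).natDegree = n) ∧
      (∀ n m : ℕ, n ≠ m → u (P n * P m) = 0) ∧ (∀ n, u (P n * P n) ≠ 0)) ↔
    (∀ n, γ n ≠ 0) := by
  have hmon : ∀ n, (P n).Monic ∧ (P n).natDegree = n := by
    have H : ∀ n, ((P n).Monic ∧ (P n).natDegree = n) ∧
        ((P (n+1)).Monic ∧ (P (n+1)).natDegree = n+1) := by
      intro n
      induction n with
      | zero =>
        refine ⟨⟨by simp [hP0], by simp [hP0]⟩, hP1 ▸ monic_X_sub_C _, ?_⟩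
        rw [hP1]; exact natDegree_X_sub_C _
      | succ n ih =>
        obtain ⟨⟨hm0, hd0⟩, hm1, hd1⟩ := ih
        have hmul : ((X - C (β (n+1))) * P (n+1)).Monic := (monic_X_sub_C _).mul hm1
        have hdmul : ((X - C (β (n+1))) * P (n+1)).natDegree = n + 2 := by
          rw [(monic_X_sub_C _).natDegree_mul hm1, natDegree_X_sub_C, hd1]; omega
        have hdlt : (C (γ (n+1)) * P n).natDegree < n + 2 := by
          have := natDegree_C_mul_le (γ (n+1)) (P n)
          omega
        have hdeg : (C (γ (n+1)) * P n).degree < ((X - C (β (n+1))) * P (n+1)).degree := by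
          have h2 : ((X - C (β (n+1))) * P (n+1)).degree = ((n+2 : ℕ) : WithBot ℕ) := by
            rw [degree_eq_natDegree hmul.ne_zero, hdmul]
          rw [h2]
          exact lt_of_le_of_lt degree_le_natDegree (by exact_mod_cast hdlt)
        refine ⟨⟨hm1, hd1⟩, ?_, ?_⟩
        · rw [hPrec n]; exact hmul.sub_of_left hdeg
        · rw [hPrec n, natDegree_sub_eq_left_of_natDegree_lt (by rw [hdmul]; exact hdlt), hdmul]
    exact fun n => (H n).1
  have hCmul : ∀ (a : ℂ) (p : ℂ[X]), u (C a * p) = a * u p := by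
    intro a p; rw [← smul_eq_C_mul, map_smul, smul_eq_mul]
  have hsq : ∀ n, u (P (n+1) * P (n+1)) = γ (n+1) * u (P n * P n) := by
    intro n
    have step1 : u (P (n+1) * P (n+1)) = u (X * P n * P (n+1)) := by
      cases n with
      | zero =>
        have h : P 1 * P 1 = X * P 0 * P 1 - C (β 0) * (P 0 * P 1) := by
          rw [hP0, hP1]; ring
        rw [h, map_sub, hCmul, huorth 0 1 (by norm_num), mul_zero, sub_zero]
      | succ m =>
        have h : P (m+2) * P (m+2) = X * P (m+1) * P (m+2)
            - C (β (m+1)) * (P (m+1) * P (m+2)) - C (γ (m+1)) * (P m * P (m+2)) := by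
          rw [hPrec m]; ring
        rw [h, map_sub, map_sub, hCmul, hCmul, huorth (m+1) (m+2) (by omega),
          huorth m (m+2) (by omega)]
        ring
    have h : X * P n * P (n+1) = P n * P (n+2) + C (β (n+1)) * (P n * P (n+1))
        + C (γ (n+1)) * (P n * P n) := by
      rw [hPrec n]; ring
    rw [step1, h, map_add, map_add, hCmul, hCmul, huorth n (n+2) (by omega),
      huorth n (n+1) (by omega)]
    ring
  have hu0 : u (P 0 * P 0) = γ 0 := by rw [hP0]; simpa using hu1
  constructor
  · rintro ⟨-, -, -, h4⟩ n
    cases n with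
    | zero => rw [← hu0]; exact h4 0
    | succ m => exact fun h => h4 (m+1) (by rw [hsq m, h, zero_mul])
  · intro hγ
    refine ⟨fun n => (hmon n).1, fun n => (hmon n).2, huorth, ?_⟩
    intro n
    induction n with
    | zero => rw [hu0]; exact hγ 0
    | succ m ih => rw [hsq m]; exact mul_ne_zero (hγ (m+1)) ih
end

section
/- Let (P_n)_{n≥0} be a simple set in ℂ[x] with dual basis (a_n)_{n≥0}, let k ≥ 0, define P_n^{[k]}(x) = (dᵏ/dxᵏ) P_{n+k}(x) / (n+1)_k where (n+1)_k = (n+1)(n+2)⋯(n+k) is the Pochhammer symbol, and let (a_n^{[k]})_{n≥0} be the dual basis of the simple set (P_n^{[k]})_{n≥0}. Then Dᵏ(a_n^{[k]}) = (−1)ᵏ (n+1)_k · a_{n+k} for all n, k ≥ 0. -/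
open Polynomial

/-- Left multiplication of a linear functional `u` on `ℂ[X]` by a polynomial `φ`:
`⟨φu, p⟩ = ⟨u, φ·p⟩`. -/
noncomputable def pmul (φ : ℂ[X]) (u : ℂ[X] →ₗ[ℂ] ℂ) : ℂ[X] →ₗ[ℂ] ℂ :=
  u ∘ₗ LinearMap.mulLeft ℂ φ

/-- Distributional derivative of a linear functional on `ℂ[X]`: `⟨Du, p⟩ = −⟨u, p′⟩`. -/
noncomputable def fder (u : ℂ[X] →ₗ[ℂ] ℂ) : ℂ[X] →ₗ[ℂ] ℂ :=
  -(u ∘ₗ (Polynomial.derivative : ℂ[X] →ₗ[ℂ] ℂ[X]))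

lemma span_simple (P : ℕ → ℂ[X]) (hP : ∀ n, (P n).degree = n) :
    Submodule.span ℂ (Set.range P) = ⊤ := by
  have H : ∀ n (p : ℂ[X]), p.natDegree < n → p ∈ Submodule.span ℂ (Set.range P) := by
    intro n
    induction n with
    | zero => intro p h; omega
    | succ n ih =>
      intro p hpn
      by_cases hp0 : p = 0
      · simp [hp0]
      set m := p.natDegree with hm
      have hPn0 : P m ≠ 0 := fun h => by
        have := hP m; rw [h, degree_zero] at this; exact absurd this (by simp)
      have hlcP : (P m).leadingCoeff ≠ 0 := leadingCoeff_ne_zero.mpr hPn0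
      set c := p.leadingCoeff / (P m).leadingCoeff with hc
      have hmem : c • P m ∈ Submodule.span ℂ (Set.range P) :=
        Submodule.smul_mem _ _ (Submodule.subset_span ⟨m, rfl⟩)
      have hdeg : p.degree = (c • P m).degree := by
        rw [smul_eq_C_mul, degree_C_mul (by
          simpa [hc] using div_ne_zero (leadingCoeff_ne_zero.mpr hp0) hlcP),
          hP m, degree_eq_natDegree hp0]
      have hlc : p.leadingCoeff = (c • P m).leadingCoeff := by
        rw [smul_eq_C_mul, leadingCoeff_mul, leadingCoeff_C, hc,
          div_mul_cancel₀ _ hlcP]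
      have hsub : (p - c • P m).degree < p.degree := degree_sub_lt hdeg hp0 hlc
      have hq : p - c • P m ∈ Submodule.span ℂ (Set.range P) := by
        by_cases hq0 : p - c • P m = 0
        · simp [hq0]
        · apply ih
          have : (p - c • P m).natDegree < m := by
            have := natDegree_lt_natDegree hq0 (by rwa [degree_eq_natDegree hp0] at hsub ⊢)
            omega
          omega
      have := Submodule.add_mem _ hq hmem
      simpa using this
  exact eq_top_iff.mpr fun p _ => H (p.natDegree + 1) p (by omega)

lemma fder_iter (u : ℂ[X] →ₗ[ℂ] ℂ) (k : ℕ) (p : ℂ[X]) :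
    fder^[k] u p = (-1 : ℂ) ^ k * u (derivative^[k] p) := by
  induction k generalizing p with
  | zero => simp
  | succ k ih =>
    rw [Function.iterate_succ_apply', fder]
    simp only [LinearMap.neg_apply, LinearMap.comp_apply, ih, Function.iterate_succ_apply]
    ring

lemma prod_ne (m k : ℕ) : (∏ i ∈ Finset.range k, ((m : ℂ) + 1 + (i : ℂ))) ≠ 0 := by
  rw [Finset.prod_ne_zero_iff]
  intro i _
  have : ((m : ℂ) + 1 + (i : ℂ)) = ((m + 1 + i : ℕ) : ℂ) := by push_cast; ring
  rw [this]
  exact Nat.cast_ne_zero.mpr (by omega)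

/-- if `(P n)` is a simple set with dual basis `(ad n)`, and for each `k`
`P_n^{[k]} = (dᵏ/dxᵏ)P_{n+k}/(n+1)_k` is the normalized `k`-th derivative with dual basis
`(aK k n)`, then `Dᵏ(a_n^{[k]}) = (−1)ᵏ (n+1)_k a_{n+k}` for all `n, k ≥ 0`. -/
theorem stmt10 (P : ℕ → ℂ[X]) (hP : ∀ n, (P n).degree = n)
    (ad : ℕ → (ℂ[X] →ₗ[ℂ] ℂ))
    (had : ∀ n k, ad n (P k) = if n = k then 1 else 0)
    (Pk : ℕ → ℕ → ℂ[X])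
    (hPk : ∀ k n, Pk k n =
      (∏ i ∈ Finset.range k, ((n : ℂ) + 1 + (i : ℂ)))⁻¹ • derivative^[k] (P (n + k)))
    (aK : ℕ → ℕ → (ℂ[X] →ₗ[ℂ] ℂ))
    (haK : ∀ k n j, aK k n (Pk k j) = if n = j then 1 else 0) :
    ∀ k n : ℕ,
      fder^[k] (aK k n) =
        ((-1 : ℂ) ^ k * ∏ i ∈ Finset.range k, ((n : ℂ) + 1 + (i : ℂ))) • ad (n + k) := by
  intro k n
  apply LinearMap.ext_on (span_simple P hP)
  rintro _ ⟨j, rfl⟩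
  rw [fder_iter, LinearMap.smul_apply, had]
  by_cases hjk : j < k
  · have h0 : derivative^[k] (P j) = 0 :=
      iterate_derivative_eq_zero (by
        rw [natDegree_eq_of_degree_eq_some (hP j)]; exact hjk)
    rw [h0, map_zero, if_neg (by omega)]
    simp
  · push_neg at hjk
    set m := j - k with hm
    have hjm : j = m + k := by omega
    have hd : derivative^[k] (P j) =
        (∏ i ∈ Finset.range k, ((m : ℂ) + 1 + (i : ℂ))) • Pk k m := by
      rw [hPk, smul_smul, mul_inv_cancel₀ (prod_ne m k), one_smul, hjm]
    rw [hd, map_smul, haK, smul_eq_mul]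
    by_cases hnm : n = m
    · subst hnm
      rw [if_pos rfl, if_pos (by omega)]
      simp only [smul_eq_mul, mul_one]
      try ring
    · rw [if_neg hnm, if_neg (by omega)]
      simp
end

section
/- Let u be a regular functional on ℂ[x] satisfying D(φu) = ψu, where φ, ψ are polynomials with deg φ ≤ 2, deg ψ ≤ 1, and at least one of φ, ψ nonzero. Then neither φ nor ψ is the zero polynomial, and deg ψ = 1. -/
open Polynomial

/-- `(P n)` is a monic orthogonal polynomial sequence for the functional `u`. -/
def IsMonicOPS (u : ℂ[X] →ₗ[ℂ] ℂ) (P : ℕ → ℂ[X]) : Prop :=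
  (∀ n, (P n).Monic) ∧ (∀ n, (P n).natDegree = n) ∧
    (∀ m n : ℕ, m ≠ n → u (P m * P n) = 0) ∧ (∀ n, u (P n * P n) ≠ 0)

/-- A functional `u` on `ℂ[X]` is regular (quasi-definite). -/
def FRegular (u : ℂ[X] →ₗ[ℂ] ℂ) : Prop :=
  ∃ P : ℕ → ℂ[X], (∀ n, (P n).degree = n) ∧
    (∀ m n : ℕ, m ≠ n → u (P m * P n) = 0) ∧ (∀ n, u (P n * P n) ≠ 0)


-- antiderivative exists
lemma deriv_surj (q : ℂ[X]) : ∃ p : ℂ[X], derivative p = q := by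
  induction q using Polynomial.induction_on' with
  | add p q hp hq =>
    obtain ⟨a, ha⟩ := hp; obtain ⟨b, hb⟩ := hq
    exact ⟨a + b, by simp [ha, hb]⟩
  | monomial n a =>
    refine ⟨C (a / (n + 1)) * X ^ (n + 1), ?_⟩
    have hn : ((n : ℂ) + 1) ≠ 0 := Nat.cast_add_one_ne_zero n
    rw [derivative_C_mul, derivative_X_pow]
    push_cast
    rw [← mul_assoc, ← C_mul, div_mul_cancel₀ _ hn, C_mul_X_pow_eq_monomial]

-- span of a degree-graded family
lemma mem_spanP (P : ℕ → ℂ[X]) (hP : ∀ n, (P n).degree = n) :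
    ∀ (n : ℕ) (q : ℂ[X]), q.natDegree ≤ n → q ∈ Submodule.span ℂ (Set.range P) := by
  have hnd : ∀ n, (P n).natDegree = n := fun n => natDegree_eq_of_degree_eq_some (hP n)
  have hne : ∀ n, P n ≠ 0 := by
    intro n h
    have := hP n
    rw [h, degree_zero] at this
    simp at this
  have hlc : ∀ n, (P n).coeff n ≠ 0 := by
    intro n
    have h2 := leadingCoeff_ne_zero.mpr (hne n)
    rwa [leadingCoeff, hnd] at h2
  intro n
  induction n with
  | zero =>
    intro q hq
    have hq0 : q = C (q.coeff 0) := eq_C_of_natDegree_le_zero hq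
    have hP0 : P 0 = C ((P 0).coeff 0) := eq_C_of_natDegree_le_zero (hnd 0).le
    have : q = (q.coeff 0 / (P 0).coeff 0) • P 0 := by
      rw [hq0, hP0, smul_C]
      simp only [coeff_C_zero, smul_eq_mul]
      rw [div_mul_cancel₀ _ (hlc 0)]
    rw [this]
    exact Submodule.smul_mem _ _ (Submodule.subset_span ⟨0, rfl⟩)
  | succ n ih =>
    intro q hq
    set c : ℂ := q.coeff (n + 1) / (P (n + 1)).coeff (n + 1) with hc
    have hr : (q - c • P (n + 1)).natDegree ≤ n := by
      apply natDegree_le_iff_coeff_eq_zero.mpr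
      intro m hm
      rcases eq_or_lt_of_le (Nat.succ_le_of_lt hm) with h | h
      · simp only [coeff_sub, coeff_smul, ← h, smul_eq_mul]
        rw [hc, div_mul_cancel₀ _ (hlc (n + 1))]
        ring
      · have h1 : q.coeff m = 0 := coeff_eq_zero_of_natDegree_lt (lt_of_le_of_lt hq h)
        have h2 : (P (n + 1)).coeff m = 0 :=
          coeff_eq_zero_of_natDegree_lt (by rw [hnd]; exact h)
        simp [h1, h2]
    have := ih _ hr
    have hmem : c • P (n + 1) ∈ Submodule.span ℂ (Set.range P) :=
      Submodule.smul_mem _ _ (Submodule.subset_span ⟨n + 1, rfl⟩)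
    have := Submodule.add_mem _ this hmem
    simpa using this

-- key regularity lemma
lemma reg_ker (u : ℂ[X] →ₗ[ℂ] ℂ) (hu : FRegular u) (q : ℂ[X])
    (h : ∀ p, u (q * p) = 0) : q = 0 := by
  obtain ⟨P, hP, horth, hPnz⟩ := hu
  have hq : q ∈ Submodule.span ℂ (Set.range P) := mem_spanP P hP q.natDegree q le_rfl
  rw [Finsupp.mem_span_range_iff_exists_finsupp] at hq
  obtain ⟨c, hcq⟩ := hq
  have hck : ∀ k, c k = 0 := by
    intro k
    have h0 := h (P k)
    rw [← hcq] at h0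
    rw [Finsupp.sum, Finset.sum_mul] at h0
    simp only [smul_mul_assoc] at h0
    rw [map_sum] at h0
    simp only [map_smul, smul_eq_mul] at h0
    rw [Finset.sum_eq_single k (fun j _ hj => by rw [horth j k hj, mul_zero])
      (fun hk => by simp [Finsupp.notMem_support_iff.mp hk])] at h0
    exact (mul_eq_zero.mp h0).resolve_right (hPnz k)
  rw [← hcq]
  simp [Finsupp.sum, hck]

lemma reg_one (u : ℂ[X] →ₗ[ℂ] ℂ) (hu : FRegular u) : u 1 ≠ 0 := by
  obtain ⟨P, hP, horth, hPnz⟩ := hu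
  have h0 : P 0 = C ((P 0).coeff 0) :=
    eq_C_of_degree_le_zero (by rw [hP 0]; exact le_rfl)
  intro h1
  apply hPnz 0
  have e : C ((P 0).coeff 0) * C ((P 0).coeff 0)
      = ((P 0).coeff 0 * (P 0).coeff 0) • (1 : Polynomial ℂ) := by
    rw [smul_eq_C_mul, mul_one, C_mul]
  rw [h0, e, map_smul, smul_eq_mul, h1, mul_zero]

/-- if `u` is regular and satisfies `D(φu) = ψu` with `deg φ ≤ 2`, `deg ψ ≤ 1`,
and at least one of `φ, ψ` nonzero, then neither `φ` nor `ψ` is zero and `deg ψ = 1`. -/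
theorem stmt11 (u : ℂ[X] →ₗ[ℂ] ℂ) (hu : FRegular u) (φ ψ : ℂ[X])
    (hφdeg : φ.degree ≤ 2) (hψdeg : ψ.degree ≤ 1) (hnz : φ ≠ 0 ∨ ψ ≠ 0)
    (hPearson : fder (pmul φ u) = pmul ψ u) :
    φ ≠ 0 ∧ ψ ≠ 0 ∧ ψ.degree = 1 := by
  have hpear : ∀ p : ℂ[X], u (ψ * p) = -(u (φ * derivative p)) := by
    intro p
    have h := LinearMap.congr_fun hPearson p
    simp only [fder, pmul, LinearMap.neg_apply, LinearMap.comp_apply,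
      LinearMap.mulLeft_apply] at h
    exact h.symm
  have hφ : φ ≠ 0 := by
    intro h0
    have hψ0 : ψ = 0 := by
      apply reg_ker u hu ψ
      intro p
      have h := hpear p
      rw [h0, zero_mul, map_zero, neg_zero] at h
      exact h
    rcases hnz with h | h
    · exact h h0
    · exact h hψ0
  have hψ : ψ ≠ 0 := by
    intro h0
    apply hφ
    apply reg_ker u hu φ
    intro p
    obtain ⟨r, hr⟩ := deriv_surj p
    have h := hpear r
    rw [h0, zero_mul, map_zero, hr] at h
    exact neg_eq_zero.mp h.symm
  have huψ : u ψ = 0 := by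
    have h := hpear 1
    rw [mul_one, derivative_one, mul_zero, map_zero, neg_zero] at h
    exact h
  refine ⟨hφ, hψ, ?_⟩
  have hle : ψ.natDegree ≤ 1 := natDegree_le_iff_degree_le.mpr hψdeg
  have hdeg : ψ.natDegree = 1 := by
    by_contra h
    have h0 : ψ.natDegree = 0 := by omega
    have hC : ψ = C (ψ.coeff 0) := eq_C_of_natDegree_le_zero h0.le
    have e : C (ψ.coeff 0) = (ψ.coeff 0) • (1 : ℂ[X]) := by
      rw [smul_eq_C_mul, mul_one]
    rw [hC, e, map_smul, smul_eq_mul] at huψ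
    rcases mul_eq_zero.mp huψ with hc | h1
    · exact hψ (by rw [hC, hc, map_zero])
    · exact reg_one u hu h1
  rw [degree_eq_natDegree hψ, hdeg, Nat.cast_one]
end

section
/- Let u be a regular functional on ℂ[x] satisfying D(φu) = ψu, with φ(x) = ax² + bx + c of degree ≤ 2, ψ(x) = px + q of degree ≤ 1, and at least one of φ, ψ nonzero. Then na + p ≠ 0 for every integer n ≥ 0. Moreover, if (P_n)_{n≥0} is the monic OPS of u and P_n^{[k]}(x) = (dᵏ/dxᵏ)P_{n+k}(x)/(n+1)_k (Pochhammer normalization), then for every k ≥ 0 the functional φᵏu is regular and (P_n^{[k]})_{n≥0} is its monic OPS. -/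
open Polynomial

/-- If a functional vanishes on a monic graded family below degree `n`, it vanishes on all
polynomials of degree `< n`. -/
lemma span_vanish (w : ℂ[X] →ₗ[ℂ] ℂ) (Q : ℕ → ℂ[X]) (hQm : ∀ j, (Q j).Monic)
    (hQd : ∀ j, (Q j).natDegree = j) (n : ℕ) (h : ∀ j : ℕ, j < n → w (Q j) = 0) :
    ∀ r : ℂ[X], r.degree < (n : WithBot ℕ) → w r = 0 := by
  suffices H : ∀ d : ℕ, ∀ r : ℂ[X], r.natDegree ≤ d → r.degree < (n : WithBot ℕ) → w r = 0 by
    intro r hr; exact H r.natDegree r le_rfl hr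
  intro d
  induction d with
  | zero =>
    intro r h0 hdeg
    by_cases hr : r = 0
    · simp [hr]
    · obtain ⟨cc, rfl⟩ := Polynomial.natDegree_eq_zero.mp (Nat.le_zero.mp h0)
      have hcc : cc ≠ 0 := fun hc => hr (by simp [hc])
      have hn : 0 < n := by
        have := hdeg
        rw [degree_C hcc] at this
        exact_mod_cast this
      have hQ0 : Q 0 = 1 := (Polynomial.Monic.natDegree_eq_zero (hQm 0)).mp (hQd 0)
      have : (C cc : ℂ[X]) = cc • Q 0 := by simp [hQ0, Polynomial.smul_eq_C_mul]
      rw [this, map_smul, h 0 hn, smul_zero]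
  | succ d ih =>
    intro r hd hdeg
    by_cases hr : r = 0
    · simp [hr]
    by_cases hle : r.natDegree ≤ d
    · exact ih r hle hdeg
    have hnd : r.natDegree = d + 1 := le_antisymm hd (not_le.mp hle)
    have hdr : r.degree = ((d + 1 : ℕ) : WithBot ℕ) := by
      rw [degree_eq_natDegree hr, hnd]
    set g : ℂ[X] := C r.leadingCoeff * Q (d + 1) with hg
    have hlc0 : r.leadingCoeff ≠ 0 := leadingCoeff_ne_zero.mpr hr
    have hQne : Q (d + 1) ≠ 0 := (hQm (d + 1)).ne_zero
    have hdg : g.degree = r.degree := by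
      rw [hg, degree_mul, degree_C hlc0, degree_eq_natDegree hQne, hQd, hdr]
      simp
    have hlcg : g.leadingCoeff = r.leadingCoeff := by
      rw [hg, leadingCoeff_mul, leadingCoeff_C, (hQm (d + 1)).leadingCoeff, mul_one]
    have hsub : (r - g).degree < r.degree := degree_sub_lt hdg.symm hr hlcg.symm
    have hsubn : (r - g).degree < (n : WithBot ℕ) := lt_trans hsub hdeg
    have hsubd : (r - g).natDegree ≤ d := by
      by_cases hz : r - g = 0
      · simp [hz]
      · have : (r - g).natDegree < d + 1 :=
          (natDegree_lt_iff_degree_lt hz).mpr (by rw [← hdr]; exact hsub)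
        omega
    have hd1n : d + 1 < n := by
      have := hdeg; rw [hdr] at this; exact_mod_cast this
    have hrg : r = (r - g) + r.leadingCoeff • Q (d + 1) := by
      rw [Polynomial.smul_eq_C_mul, ← hg]; ring
    rw [hrg, map_add, map_smul, ih _ hsubd hsubn, h (d + 1) hd1n, smul_zero, add_zero]

lemma span_vanish_all (w : ℂ[X] →ₗ[ℂ] ℂ) (Q : ℕ → ℂ[X]) (hQm : ∀ j, (Q j).Monic)
    (hQd : ∀ j, (Q j).natDegree = j) (h : ∀ j : ℕ, w (Q j) = 0) :
    ∀ r : ℂ[X], w r = 0 := by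
  intro r
  refine span_vanish w Q hQm hQd (r.natDegree + 1) (fun j _ => h j) r ?_
  exact lt_of_le_of_lt degree_le_natDegree (by exact_mod_cast Nat.lt_succ_self _)

/-- Orthogonality of `P n` to all polynomials of lower degree. -/
lemma hlow (u : ℂ[X] →ₗ[ℂ] ℂ) (P : ℕ → ℂ[X]) (hOPS : IsMonicOPS u P) :
    ∀ (n : ℕ) (s : ℂ[X]), s.degree < (n : WithBot ℕ) → u (P n * s) = 0 := by
  obtain ⟨hm, hd, ho, _⟩ := hOPS
  intro n s hs
  have := span_vanish (u ∘ₗ LinearMap.mulLeft ℂ (P n)) P hm hd n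
    (fun j hj => by
      simpa using ho n j (by omega)) s hs
  simpa using this

lemma htop (u : ℂ[X] →ₗ[ℂ] ℂ) (P : ℕ → ℂ[X]) (hOPS : IsMonicOPS u P) :
    ∀ (n : ℕ) (s : ℂ[X]), s.natDegree ≤ n → u (P n * s) = s.coeff n * u (P n * P n) := by
  obtain ⟨hm, hd, ho, hz⟩ := hOPS
  intro n s hs
  have hXn : u (P n * X ^ n) = u (P n * P n) := by
    have hsub : ((X : ℂ[X]) ^ n - P n).degree < (n : WithBot ℕ) := by
      by_cases he : (X : ℂ[X]) ^ n = P n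
      · rw [he, sub_self, degree_zero]
        exact_mod_cast WithBot.bot_lt_coe n
      · have := degree_sub_lt (p := (X : ℂ[X]) ^ n) (q := P n)
          (by rw [degree_X_pow, degree_eq_natDegree (hm n).ne_zero, hd])
          (pow_ne_zero n X_ne_zero)
          (by rw [leadingCoeff_X_pow, (hm n).leadingCoeff])
        rwa [degree_X_pow] at this
    have h0 : u (P n * ((X : ℂ[X]) ^ n - P n)) = 0 := hlow u P ⟨hm, hd, ho, hz⟩ n _ hsub
    rw [mul_sub, map_sub, sub_eq_zero] at h0
    exact h0
  have hrest : u (P n * (s - C (s.coeff n) * X ^ n)) = 0 := by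
    apply hlow u P ⟨hm, hd, ho, hz⟩
    rw [degree_lt_iff_coeff_zero]
    intro m hmn
    rcases eq_or_lt_of_le hmn with h | h
    · simp [← h, coeff_X_pow]
    · rw [coeff_sub, coeff_eq_zero_of_natDegree_lt (by omega), coeff_C_mul, coeff_X_pow,
        if_neg (by omega), mul_zero, sub_zero]
  have hdec : s = (s - C (s.coeff n) * X ^ n) + s.coeff n • X ^ n := by
    rw [Polynomial.smul_eq_C_mul]; ring
  calc u (P n * s) = u (P n * ((s - C (s.coeff n) * X ^ n) + s.coeff n • X ^ n)) := by
        rw [← hdec]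
    _ = u (P n * (s - C (s.coeff n) * X ^ n)) + s.coeff n * u (P n * X ^ n) := by
        rw [mul_add, map_add, mul_smul_comm, map_smul, smul_eq_mul]
    _ = s.coeff n * u (P n * P n) := by rw [hrest, hXn, zero_add]

/-- Nondegeneracy: if `u(g·s) = 0` for all `s`, then `g = 0`. -/
lemma reg_ne (u : ℂ[X] →ₗ[ℂ] ℂ) (P : ℕ → ℂ[X]) (hOPS : IsMonicOPS u P)
    (g : ℂ[X]) (h : ∀ s, u (g * s) = 0) : g = 0 := by
  by_contra hg
  have h1 : u (P g.natDegree * g) = g.coeff g.natDegree * u (P g.natDegree * P g.natDegree) :=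
    htop u P hOPS g.natDegree g le_rfl
  rw [mul_comm, h] at h1
  exact hOPS.2.2.2 g.natDegree (by
    rcases mul_eq_zero.mp h1.symm with h2 | h2
    · exact absurd h2 (leadingCoeff_ne_zero.mpr hg)
    · exact h2) |>.elim

lemma pmul_apply (φ : ℂ[X]) (u : ℂ[X] →ₗ[ℂ] ℂ) (r : ℂ[X]) : pmul φ u r = u (φ * r) := rfl

lemma fder_apply (u : ℂ[X] →ₗ[ℂ] ℂ) (r : ℂ[X]) : fder u r = -(u (derivative r)) := rfl

lemma core (u : ℂ[X] →ₗ[ℂ] ℂ) (a b c p q : ℂ) (φ ψ : ℂ[X])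
    (hφ : φ = C a * X ^ 2 + C b * X + C c) (hψ : ψ = C p * X + C q)
    (hφne : φ ≠ 0)
    (P : ℕ → ℂ[X]) (hOPS : IsMonicOPS u P)
    (hPearson : fder (pmul φ u) = pmul ψ u) :
    (∀ n : ℕ, (n : ℂ) * a + p ≠ 0) ∧
      IsMonicOPS (pmul φ u) (fun n => ((n : ℂ) + 1)⁻¹ • derivative (P (n + 1))) := by
  have hm := hOPS.1
  have hd := hOPS.2.1
  have ho := hOPS.2.2.1
  have hz := hOPS.2.2.2
  -- the basic Pearson identity
  have hKI : ∀ r : ℂ[X], u (ψ * r + φ * derivative r) = 0 := by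
    intro r
    have h1 := DFunLike.congr_fun hPearson r
    rw [fder_apply, pmul_apply, pmul_apply] at h1
    rw [map_add, ← h1, neg_add_cancel]
  have hKI2 : ∀ g r : ℂ[X], u (φ * derivative g * r) = -u (g * (ψ * r + φ * derivative r)) := by
    intro g r
    have h1 := hKI (g * r)
    rw [derivative_mul] at h1
    have e : ψ * (g * r) + φ * (derivative g * r + g * derivative r)
        = φ * derivative g * r + g * (ψ * r + φ * derivative r) := by ring
    rw [e, map_add] at h1
    exact eq_neg_of_add_eq_zero_left h1
  set Q : ℕ → ℂ[X] := fun n => ((n : ℂ) + 1)⁻¹ • derivative (P (n + 1)) with hQdef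
  have hn1 : ∀ n : ℕ, ((n : ℂ) + 1) ≠ 0 := fun n => Nat.cast_add_one_ne_zero n
  have hcoeffD : ∀ n : ℕ, (derivative (P (n + 1))).coeff n = (n : ℂ) + 1 := by
    intro n
    rw [coeff_derivative]
    have h1 : (P (n + 1)).coeff (n + 1) = 1 := by
      have := (hm (n + 1)).coeff_natDegree
      rwa [hd] at this
    rw [h1, one_mul]
  have hQcoeff : ∀ n, (Q n).coeff n = 1 := by
    intro n
    rw [hQdef]
    simp only [coeff_smul, smul_eq_mul, hcoeffD]
    exact inv_mul_cancel₀ (hn1 n)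
  have hQdeg : ∀ n, (Q n).natDegree = n := by
    intro n
    refine le_antisymm ?_ (le_natDegree_of_ne_zero (by rw [hQcoeff]; exact one_ne_zero))
    calc (Q n).natDegree ≤ (derivative (P (n + 1))).natDegree := natDegree_smul_le _ _
      _ ≤ (P (n + 1)).natDegree - 1 := natDegree_derivative_le _
      _ = n := by rw [hd]; omega
  have hQm : ∀ n, (Q n).Monic := by
    intro n
    have : (Q n).leadingCoeff = 1 := by rw [leadingCoeff, hQdeg n, hQcoeff n]
    exact this
  have hsmul : ∀ (g r : ℂ[X]) (t : ℂ), φ * ((t • g) * r) = t • (φ * g * r) := by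
    intro g r t
    rw [Polynomial.smul_eq_C_mul, Polynomial.smul_eq_C_mul]; ring
  have hsdeg : ∀ (r : ℂ[X]) (m : ℕ), r.natDegree ≤ m →
      (ψ * r + φ * derivative r).natDegree ≤ m + 1 := by
    intro r m hr
    apply le_trans (natDegree_add_le _ _)
    apply max_le
    · refine le_trans natDegree_mul_le ?_
      have : ψ.natDegree ≤ 1 := by rw [hψ]; exact natDegree_linear_le
      omega
    · by_cases hdr : derivative r = 0
      · simp [hdr]
      · have h1 : 1 ≤ r.natDegree := by
          by_contra hcon
          obtain ⟨cc, hcc⟩ := natDegree_eq_zero.mp (by omega : r.natDegree = 0)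
          exact hdr (by rw [← hcc, derivative_C])
        have h2 : (derivative r).natDegree ≤ r.natDegree - 1 := natDegree_derivative_le r
        have h3 : φ.natDegree ≤ 2 := by rw [hφ]; exact natDegree_quadratic_le
        refine le_trans natDegree_mul_le ?_
        omega
  have hVlow : ∀ (n : ℕ) (r : ℂ[X]), r.degree < (n : WithBot ℕ) → u (φ * (Q n * r)) = 0 := by
    intro n r hr
    rw [hQdef]
    rw [hsmul, map_smul, hKI2 (P (n + 1)) r, smul_eq_mul]
    have hz2 : u (P (n + 1) * (ψ * r + φ * derivative r)) = 0 := by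
      apply hlow u P hOPS
      by_cases hr0 : r = 0
      · simp only [hr0, mul_zero, derivative_zero, add_zero, degree_zero]
        exact_mod_cast WithBot.bot_lt_coe _
      · have hlt : r.natDegree < n := (natDegree_lt_iff_degree_lt hr0).mpr hr
        have hb := hsdeg r r.natDegree le_rfl
        calc (ψ * r + φ * derivative r).degree
            ≤ ((ψ * r + φ * derivative r).natDegree : WithBot ℕ) := degree_le_natDegree
          _ < ((n + 1 : ℕ) : WithBot ℕ) := by exact_mod_cast (by omega : (ψ * r + φ * derivative r).natDegree < n + 1)
    rw [hz2, neg_zero, mul_zero]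
  have hsn : ∀ n : ℕ, (ψ * X ^ n + φ * derivative (X ^ n)).coeff (n + 1) = (n : ℂ) * a + p := by
    intro n
    cases n with
    | zero =>
      simp [hψ]
    | succ m =>
      rw [hψ, hφ, derivative_X_pow]
      have e : (C p * X + C q) * X ^ (m + 1)
          + (C a * X ^ 2 + C b * X + C c) * (C ((m + 1 : ℕ) : ℂ) * X ^ (m + 1 - 1))
          = C (p + ((m + 1 : ℕ) : ℂ) * a) * X ^ (m + 2) + C (q + ((m + 1 : ℕ) : ℂ) * b) * X ^ (m + 1)
            + C (((m + 1 : ℕ) : ℂ) * c) * X ^ m := by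
        simp only [Nat.add_sub_cancel, map_add, map_mul]
        ring
      rw [e]
      simp only [coeff_add, coeff_C_mul, coeff_X_pow]
      simp only [if_true, if_neg (by omega : ¬(m + 1 + 1 = m + 1)), if_neg (by omega : ¬(m + 1 + 1 = m))]
      simp only [mul_one, mul_zero, add_zero]
      push_cast
      ring
  have hdiag : ∀ n : ℕ, u (φ * (Q n * X ^ n))
      = -(((n : ℂ) + 1)⁻¹ * (((n : ℂ) * a + p) * u (P (n + 1) * P (n + 1)))) := by
    intro n
    rw [hQdef, hsmul, map_smul, hKI2, smul_eq_mul]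
    have hb : (ψ * X ^ n + φ * derivative (X ^ n)).natDegree ≤ n + 1 :=
      hsdeg _ n (by rw [natDegree_X_pow])
    rw [htop u P hOPS (n + 1) _ hb, hsn n]
    ring
  have hna : ∀ n : ℕ, (n : ℂ) * a + p ≠ 0 := by
    intro n h0
    have hall_low : ∀ r : ℂ[X], r.degree < ((n + 1 : ℕ) : WithBot ℕ) → u (φ * (Q n * r)) = 0 := by
      intro r hr
      have hXm : ∀ j : ℕ, ((X : ℂ[X]) ^ j).Monic := fun j => monic_X_pow j
      have hXd : ∀ j : ℕ, ((X : ℂ[X]) ^ j).natDegree = j := fun j => natDegree_X_pow j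
      have := span_vanish ((pmul φ u) ∘ₗ LinearMap.mulLeft ℂ (Q n)) (fun j => (X : ℂ[X]) ^ j)
        hXm hXd (n + 1)
        (fun j hj => by
          simp only [LinearMap.comp_apply, LinearMap.mulLeft_apply, pmul_apply]
          rcases lt_or_eq_of_le (Nat.lt_succ_iff.mp hj) with h | h
          · exact hVlow n (X ^ j) (by rw [degree_X_pow]; exact_mod_cast h)
          · rw [h, hdiag n, h0, zero_mul, mul_zero, neg_zero]) r hr
      simpa only [LinearMap.comp_apply, LinearMap.mulLeft_apply, pmul_apply] using this
    have hallQ : ∀ j : ℕ, u (φ * (Q n * Q j)) = 0 := by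
      intro j
      rcases le_or_gt j n with hj | hj
      · refine hall_low (Q j) ?_
        rw [degree_eq_natDegree (hQm j).ne_zero, hQdeg]
        exact_mod_cast Nat.lt_succ_of_le hj
      · have h1 := hVlow j (Q n) (by
          rw [degree_eq_natDegree (hQm n).ne_zero, hQdeg]; exact_mod_cast hj)
        calc u (φ * (Q n * Q j)) = u (φ * (Q j * Q n)) := by rw [mul_comm (Q n)]
          _ = 0 := h1
    have hallS : ∀ s : ℂ[X], u ((φ * Q n) * s) = 0 := by
      intro s
      have := span_vanish_all ((pmul φ u) ∘ₗ LinearMap.mulLeft ℂ (Q n)) Q hQm hQdeg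
        (fun j => by
          simpa only [LinearMap.comp_apply, LinearMap.mulLeft_apply, pmul_apply] using hallQ j) s
      simpa only [LinearMap.comp_apply, LinearMap.mulLeft_apply, pmul_apply, mul_assoc] using this
    exact (mul_ne_zero hφne (hQm n).ne_zero) (reg_ne u P hOPS _ hallS)
  refine ⟨hna, hQm, hQdeg, ?_, ?_⟩
  · intro m n hmn
    rw [pmul_apply]
    rcases lt_or_gt_of_ne hmn with h | h
    · rw [mul_comm (Q m)]
      exact hVlow n (Q m) (by rw [degree_eq_natDegree (hQm m).ne_zero, hQdeg]; exact_mod_cast h)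
    · exact hVlow m (Q n) (by rw [degree_eq_natDegree (hQm n).ne_zero, hQdeg]; exact_mod_cast h)
  · intro n
    rw [pmul_apply]
    have hdecomp : Q n * Q n = Q n * X ^ n + Q n * (Q n - X ^ n) := by ring
    have hrest : u (φ * (Q n * (Q n - X ^ n))) = 0 := by
      apply hVlow
      by_cases he : Q n = (X : ℂ[X]) ^ n
      · rw [he, sub_self, degree_zero]
        exact_mod_cast WithBot.bot_lt_coe _
      · have := degree_sub_lt (p := Q n) (q := (X : ℂ[X]) ^ n)
          (by rw [degree_X_pow, degree_eq_natDegree (hQm n).ne_zero, hQdeg])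
          (hQm n).ne_zero
          (by rw [leadingCoeff_X_pow, (hQm n).leadingCoeff])
        rwa [degree_eq_natDegree (hQm n).ne_zero, hQdeg] at this
    rw [hdecomp, mul_add, map_add, hrest, add_zero, hdiag n]
    simp only [ne_eq, neg_eq_zero]
    exact mul_ne_zero (inv_ne_zero (hn1 n)) (mul_ne_zero (hna n) (hz (n + 1)))

lemma pmul_one (u : ℂ[X] →ₗ[ℂ] ℂ) : pmul 1 u = u :=
  LinearMap.ext fun r => by rw [pmul_apply, one_mul]

lemma pmul_pmul (φ ρ : ℂ[X]) (u : ℂ[X] →ₗ[ℂ] ℂ) : pmul φ (pmul ρ u) = pmul (ρ * φ) u :=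
  LinearMap.ext fun r => by rw [pmul_apply, pmul_apply, pmul_apply, mul_assoc]

lemma pearson_step (w : ℂ[X] →ₗ[ℂ] ℂ) (φ χ : ℂ[X]) (h : fder (pmul φ w) = pmul χ w) :
    fder (pmul φ (pmul φ w)) = pmul (χ + derivative φ) (pmul φ w) := by
  refine LinearMap.ext fun r => ?_
  have h1 := DFunLike.congr_fun h (φ * r)
  rw [fder_apply, pmul_apply, pmul_apply, derivative_mul] at h1
  rw [fder_apply, pmul_apply, pmul_apply, pmul_apply, pmul_apply]
  have e2 : φ * ((χ + derivative φ) * r)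
      = χ * (φ * r) + φ * (derivative φ * r + φ * derivative r) - φ * (φ * derivative r) := by
    ring
  rw [e2, map_sub, map_add, ← h1]
  ring

lemma isMonicOPS_congr (v : ℂ[X] →ₗ[ℂ] ℂ) (Q Q' : ℕ → ℂ[X]) (hqq : ∀ n, Q n = Q' n)
    (h : IsMonicOPS v Q) : IsMonicOPS v Q' := by
  obtain ⟨h1, h2, h3, h4⟩ := h
  exact ⟨fun n => hqq n ▸ h1 n, fun n => hqq n ▸ h2 n,
    fun m n hmn => by rw [← hqq, ← hqq]; exact h3 m n hmn,
    fun n => by rw [← hqq]; exact h4 n⟩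

/-- if `u` is regular with monic OPS `(P n)` and satisfies `D(φu) = ψu` with
`φ = ax² + bx + c`, `ψ = px + q` not both zero, then `na + p ≠ 0` for every `n ≥ 0`, and for
every `k ≥ 0` the functional `φᵏu` is regular with monic OPS
`P_n^{[k]} = (dᵏ/dxᵏ)P_{n+k}/(n+1)_k`. -/
theorem stmt12 (u : ℂ[X] →ₗ[ℂ] ℂ) (a b c p q : ℂ) (φ ψ : ℂ[X])
    (hφ : φ = C a * X ^ 2 + C b * X + C c) (hψ : ψ = C p * X + C q)
    (hnz : φ ≠ 0 ∨ ψ ≠ 0)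
    (P : ℕ → ℂ[X]) (hOPS : IsMonicOPS u P)
    (hPearson : fder (pmul φ u) = pmul ψ u)
    (Pk : ℕ → ℕ → ℂ[X])
    (hPk : ∀ k n, Pk k n =
      (∏ i ∈ Finset.range k, ((n : ℂ) + 1 + (i : ℂ)))⁻¹ • derivative^[k] (P (n + k))) :
    (∀ n : ℕ, (n : ℂ) * a + p ≠ 0) ∧ (∀ k : ℕ, IsMonicOPS (pmul (φ ^ k) u) (Pk k)) := by
  have hφne : φ ≠ 0 := by
    intro h0
    have hψ0 : ψ = 0 := by
      apply reg_ne u P hOPS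
      intro s
      have h1 := DFunLike.congr_fun hPearson s
      have h2 : pmul (0 : ℂ[X]) u = 0 := LinearMap.ext fun r => by
        rw [pmul_apply, zero_mul, map_zero]; rfl
      rw [h0, h2, pmul_apply] at h1
      simpa [fder] using h1.symm
    rcases hnz with h | h
    · exact h h0
    · exact h hψ0
  have hcore0 := core u a b c p q φ ψ hφ hψ hφne P hOPS hPearson
  refine ⟨hcore0.1, ?_⟩
  have hPkstep : ∀ k n, Pk (k + 1) n = ((n : ℂ) + 1)⁻¹ • derivative (Pk k (n + 1)) := by
    intro k n
    rw [hPk (k + 1) n, hPk k (n + 1), derivative_smul, smul_smul,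
      ← Function.iterate_succ_apply' derivative k]
    have hidx : n + 1 + k = n + (k + 1) := by omega
    rw [hidx]
    congr 1
    have hprod : (∏ i ∈ Finset.range (k + 1), ((n : ℂ) + 1 + (i : ℂ)))
        = (∏ i ∈ Finset.range k, (((n + 1 : ℕ) : ℂ) + 1 + (i : ℂ))) * ((n : ℂ) + 1) := by
      rw [Finset.prod_range_succ']
      congr 1
      · apply Finset.prod_congr rfl
        intro i _
        push_cast
        ring
      · push_cast
        ring
    rw [hprod, mul_inv]
    ring
  have hder : derivative φ = C (2 * a) * X + C b := by
    rw [hφ]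
    simp only [derivative_add, derivative_mul, derivative_C, derivative_X_pow, derivative_X,
      zero_mul, zero_add, mul_one, map_mul]
    push_cast
    ring
  have main : ∀ k : ℕ, IsMonicOPS (pmul (φ ^ k) u) (Pk k) ∧
      fder (pmul φ (pmul (φ ^ k) u))
        = pmul (C (p + 2 * (k : ℂ) * a) * X + C (q + (k : ℂ) * b)) (pmul (φ ^ k) u) := by
    intro k
    induction k with
    | zero =>
      have h1 : pmul (φ ^ 0) u = u := by rw [pow_zero]; exact pmul_one u
      constructor
      · rw [h1]
        exact isMonicOPS_congr u P (Pk 0) (fun n => by rw [hPk]; simp) hOPS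
      · rw [h1]
        have h2 : C (p + 2 * ((0 : ℕ) : ℂ) * a) * X + C (q + ((0 : ℕ) : ℂ) * b) = ψ := by
          rw [hψ]; push_cast; ring_nf
        rw [h2]
        exact hPearson
    | succ k ih =>
      obtain ⟨ihOPS, ihP⟩ := ih
      have hc := core (pmul (φ ^ k) u) a b c (p + 2 * (k : ℂ) * a) (q + (k : ℂ) * b) φ
        (C (p + 2 * (k : ℂ) * a) * X + C (q + (k : ℂ) * b)) hφ rfl hφne (Pk k) ihOPS ihP
      have hpk1 : pmul φ (pmul (φ ^ k) u) = pmul (φ ^ (k + 1)) u := by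
        rw [pmul_pmul, pow_succ]
      constructor
      · rw [← hpk1]
        exact isMonicOPS_congr _ _ _ (fun n => (hPkstep k n).symm) hc.2
      · have hstep := pearson_step (pmul (φ ^ k) u) φ _ ihP
        rw [hpk1] at hstep
        have heq : (C (p + 2 * (k : ℂ) * a) * X + C (q + (k : ℂ) * b)) + derivative φ
            = C (p + 2 * ((k + 1 : ℕ) : ℂ) * a) * X + C (q + ((k + 1 : ℕ) : ℂ) * b) := by
          rw [hder]
          push_cast
          simp only [map_add, map_mul, map_one, map_ofNat]
          ring
        rw [heq] at hstep
        exact hstep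
  exact fun k => (main k).1
end

section
/- Let u be a regular functional on ℂ[x] satisfying D(φu) = ψu, where (φ,ψ) is an admissible pair with φ(x) = ax² + bx + c and ψ(x) = px + q, and let (P_n)_{n≥0} be the monic OPS of u with three-term recurrence coefficients β_n, γ_n. Then for every n ≥ 0 the structure relation (Al-Salam–Chihara) holds: φ(x) P_n′(x) = a_n P_{n+1}(x) + b_n P_n(x) + c_n P_{n−1}(x), where a_n = n·a, b_n = −ψ(β_n)/2, c_n = −((n−1)a + p)·γ_n, and c_n ≠ 0 for every n ≥ 1. -/
open Polynomial

private lemma span_P (P : ℕ → ℂ[X]) (hm : ∀ n, (P n).Monic) (hd : ∀ n, (P n).natDegree = n) :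
    ∀ (m : ℕ) (R : ℂ[X]), R.degree ≤ (m : ℕ) →
      ∃ c : ℕ → ℂ, R = ∑ k ∈ Finset.range (m+1), C (c k) * P k := by
  intro m
  induction m with
  | zero =>
    intro R hR
    refine ⟨fun _ => R.coeff 0, ?_⟩
    have h1 : P 0 = 1 := ((hm 0).natDegree_eq_zero).mp (hd 0)
    rw [Finset.sum_range_one, h1, mul_one]
    exact_mod_cast eq_C_of_degree_le_zero (by exact_mod_cast hR)
  | succ m ih =>
    intro R hR
    have hc1 : (P (m+1)).coeff (m+1) = 1 := by
      have := hm (m+1); rw [Polynomial.Monic, Polynomial.leadingCoeff, hd (m+1)] at this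
      exact this
    have hR' : (R - C (R.coeff (m+1)) * P (m+1)).degree ≤ (m : ℕ) := by
      rw [Polynomial.degree_le_iff_coeff_zero]
      intro j hj
      have hj1 : m + 1 ≤ j := by exact_mod_cast hj
      rcases eq_or_lt_of_le hj1 with h | h
      · rw [coeff_sub, coeff_C_mul, ← h, hc1, mul_one, sub_self]
      · have h1 : R.coeff j = 0 :=
          coeff_eq_zero_of_degree_lt (lt_of_le_of_lt hR (by exact_mod_cast h))
        have h2 : (P (m+1)).coeff j = 0 :=
          coeff_eq_zero_of_natDegree_lt (by rw [hd (m+1)]; omega)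
        rw [coeff_sub, coeff_C_mul, h1, h2, mul_zero, sub_self]
    obtain ⟨cc, hcc⟩ := ih _ hR'
    refine ⟨Function.update cc (m+1) (R.coeff (m+1)), ?_⟩
    rw [Finset.sum_range_succ, Function.update_self]
    have : ∑ k ∈ Finset.range (m+1), C (Function.update cc (m+1) (R.coeff (m+1)) k) * P k
        = ∑ k ∈ Finset.range (m+1), C (cc k) * P k := by
      apply Finset.sum_congr rfl
      intro k hk
      rw [Function.update_of_ne (by simp at hk; omega)]
    rw [this, ← hcc]
    ring

private lemma orth_low (u : ℂ[X] →ₗ[ℂ] ℂ) (P : ℕ → ℂ[X])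
    (hm : ∀ n, (P n).Monic) (hd : ∀ n, (P n).natDegree = n)
    (horth : ∀ m n : ℕ, m ≠ n → u (P m * P n) = 0) :
    ∀ (m n : ℕ) (R : ℂ[X]), R.degree ≤ (m : ℕ) → m < n → u (R * P n) = 0 := by
  intro m n R hR hmn
  obtain ⟨cc, hcc⟩ := span_P P hm hd m R hR
  rw [hcc, Finset.sum_mul, map_sum]
  apply Finset.sum_eq_zero
  intro k hk
  simp only [Finset.mem_range] at hk
  rw [mul_assoc, ← Polynomial.smul_eq_C_mul, map_smul, horth k n (by omega), smul_zero]

private lemma eq_zero_of_orth (u : ℂ[X] →ₗ[ℂ] ℂ) (P : ℕ → ℂ[X])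
    (hm : ∀ n, (P n).Monic) (hd : ∀ n, (P n).natDegree = n)
    (horth : ∀ m n : ℕ, m ≠ n → u (P m * P n) = 0) (hnz : ∀ n, u (P n * P n) ≠ 0) :
    ∀ (m : ℕ) (R : ℂ[X]), R.degree ≤ (m : ℕ) → (∀ k, k ≤ m → u (R * P k) = 0) → R = 0 := by
  intro m R hR hortho
  obtain ⟨cc, hcc⟩ := span_P P hm hd m R hR
  have hcz : ∀ j, j ≤ m → cc j = 0 := by
    intro j hj
    have h1 := hortho j hj
    rw [hcc, Finset.sum_mul, map_sum] at h1
    rw [Finset.sum_eq_single j] at h1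
    · rw [mul_assoc, ← Polynomial.smul_eq_C_mul, map_smul, smul_eq_mul] at h1
      exact (mul_eq_zero.mp h1).resolve_right (hnz j)
    · intro k _ hkj
      rw [mul_assoc, ← Polynomial.smul_eq_C_mul, map_smul, horth k j hkj, smul_zero]
    · intro h; exact absurd (Finset.mem_range.mpr (by omega)) h
  rw [hcc]
  apply Finset.sum_eq_zero
  intro k hk
  simp only [Finset.mem_range] at hk
  rw [hcz k (by omega), map_zero, zero_mul]

private lemma coeff_self (P : ℕ → ℂ[X]) (hm : ∀ n, (P n).Monic) (hd : ∀ n, (P n).natDegree = n)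
    (n : ℕ) : (P n).coeff n = 1 := by
  have := hm n; rw [Polynomial.Monic, Polynomial.leadingCoeff, hd n] at this; exact this

private lemma L1 (a b c : ℂ) (φ : ℂ[X]) (hφ : φ = C a * X ^ 2 + C b * X + C c)
    (P : ℕ → ℂ[X]) (hm : ∀ n, (P n).Monic) (hd : ∀ n, (P n).natDegree = n) (hP0 : P 0 = 1)
    (m : ℕ) :
    (φ * Polynomial.derivative (P m) - C ((m : ℂ) * a) * P (m+1)).degree ≤ (m : ℕ) := by
  rcases m with _ | m
  · simp [hP0]
  rw [Polynomial.degree_le_iff_coeff_zero]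
  intro j hj
  have hj1 : m + 2 ≤ j := by
    have : (m + 1 : ℕ) < j := by exact_mod_cast hj
    omega
  have hdg : (derivative (P (m+1))).natDegree ≤ m := by
    have := Polynomial.natDegree_derivative_le (P (m+1))
    rw [hd (m+1)] at this; omega
  rcases eq_or_lt_of_le hj1 with h | h
  · subst h
    rw [coeff_sub, hφ, add_mul, add_mul, coeff_add, coeff_add, mul_assoc, coeff_C_mul,
      Polynomial.coeff_X_pow_mul, mul_assoc, coeff_C_mul]
    have e1 : (X * derivative (P (m+1))).coeff (m + 2) = (derivative (P (m+1))).coeff (m+1) :=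
      Polynomial.coeff_X_mul _ _
    rw [e1, coeff_C_mul, coeff_C_mul]
    rw [Polynomial.coeff_derivative, Polynomial.coeff_derivative,
      coeff_self P hm hd (m+1),
      coeff_eq_zero_of_natDegree_lt (p := P (m+1)) (by rw [hd]; omega),
      coeff_eq_zero_of_natDegree_lt (p := derivative (P (m+1))) (by omega),
      coeff_self P hm hd (m+2)]
    push_cast
    ring
  · have h1 : (φ * derivative (P (m+1))).coeff j = 0 := by
      apply coeff_eq_zero_of_natDegree_lt
      calc (φ * derivative (P (m+1))).natDegree
          ≤ φ.natDegree + (derivative (P (m+1))).natDegree := natDegree_mul_le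
        _ ≤ 2 + m := by
            gcongr
            rw [hφ]; compute_degree
        _ < j := by omega
    have h2 : (C ((↑(m+1) : ℂ) * a) * P (m+2)).coeff j = 0 := by
      apply coeff_eq_zero_of_natDegree_lt
      calc (C ((↑(m+1) : ℂ) * a) * P (m+2)).natDegree ≤ (P (m+2)).natDegree :=
            natDegree_C_mul_le _ _
        _ < j := by rw [hd]; omega
    rw [coeff_sub, h1, h2, sub_self]

private lemma L2 (p q : ℂ) (ψ : ℂ[X]) (hψ : ψ = C p * X + C q)
    (P : ℕ → ℂ[X]) (hm : ∀ n, (P n).Monic) (hd : ∀ n, (P n).natDegree = n)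
    (m : ℕ) :
    (ψ * P m - C p * P (m+1)).degree ≤ (m : ℕ) := by
  rw [Polynomial.degree_le_iff_coeff_zero]
  intro j hj
  have hj1 : m + 1 ≤ j := by
    have : (m : ℕ) < j := by exact_mod_cast hj
    omega
  rcases eq_or_lt_of_le hj1 with h | h
  · subst h
    rw [coeff_sub, hψ, add_mul, coeff_add, mul_assoc, coeff_C_mul, Polynomial.coeff_X_mul,
      coeff_C_mul, coeff_C_mul, coeff_self P hm hd m,
      coeff_eq_zero_of_natDegree_lt (p := P m) (by rw [hd]; omega),
      coeff_self P hm hd (m+1)]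
    ring
  · have h1 : (ψ * P m).coeff j = 0 := by
      apply coeff_eq_zero_of_natDegree_lt
      calc (ψ * P m).natDegree ≤ ψ.natDegree + (P m).natDegree := natDegree_mul_le
        _ ≤ 1 + m := add_le_add (by rw [hψ]; compute_degree) (le_of_eq (hd m))
        _ < j := by omega
    have h2 : (C p * P (m+1)).coeff j = 0 := by
      apply coeff_eq_zero_of_natDegree_lt
      calc (C p * P (m+1)).natDegree ≤ (P (m+1)).natDegree := natDegree_C_mul_le _ _
        _ < j := by rw [hd]; omega
    rw [coeff_sub, h1, h2, sub_self]

/-- Al-Salam–Chihara structure relation: if `u` is regular with monic OPS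
`(P n)` having TTRR coefficients `β, γ`, and `u` satisfies `D(φu) = ψu` for an admissible
pair `(φ, ψ)` with `φ = ax² + bx + c`, `ψ = px + q`, then
`φ P_n′ = a_n P_{n+1} + b_n P_n + c_n P_{n−1}` with `a_n = na`, `b_n = −ψ(β_n)/2`,
`c_n = −((n−1)a + p)γ_n`, and `c_n ≠ 0` for `n ≥ 1`. -/
theorem stmt15 (u : ℂ[X] →ₗ[ℂ] ℂ) (a b c p q : ℂ) (φ ψ : ℂ[X])
    (hφ : φ = C a * X ^ 2 + C b * X + C c) (hψ : ψ = C p * X + C q)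
    (hadm : ∀ n : ℕ, (n : ℂ) * a + p ≠ 0)
    (P : ℕ → ℂ[X]) (β γ : ℕ → ℂ) (hOPS : IsMonicOPS u P)
    (hP0 : P 0 = 1) (hP1 : P 1 = X - C (β 0))
    (hPrec : ∀ n : ℕ, P (n + 2) = (X - C (β (n + 1))) * P (n + 1) - C (γ (n + 1)) * P n)
    (hPearson : fder (pmul φ u) = pmul ψ u) :
    (∀ n : ℕ, φ * Polynomial.derivative (P n) =
        C ((n : ℂ) * a) * P (n + 1) + C (-(ψ.eval (β n)) / 2) * P n +
          (if n = 0 then 0 else C (-((((n : ℂ) - 1) * a + p) * γ n)) * P (n - 1))) ∧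
    (∀ n : ℕ, 1 ≤ n → -((((n : ℂ) - 1) * a + p) * γ n) ≠ 0) := by
  obtain ⟨hm, hd, horth, hnz⟩ := hOPS
  have hPe : ∀ f : ℂ[X], u (φ * Polynomial.derivative f) = - u (ψ * f) := by
    intro f
    have h := LinearMap.congr_fun hPearson f
    simp only [fder, pmul, LinearMap.neg_apply, LinearMap.comp_apply,
      LinearMap.mulLeft_apply] at h
    linear_combination -h
  have huC : ∀ (r : ℂ) (g : ℂ[X]), u (C r * g) = r * u g := by
    intro r g
    rw [← Polynomial.smul_eq_C_mul, map_smul, smul_eq_mul]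
  have hX : ∀ n : ℕ, X * P n = P (n+1) + C (β n) * P n +
      (if n = 0 then 0 else C (γ n) * P (n-1)) := by
    intro n
    rcases n with _ | k
    · rw [if_pos rfl, hP0, hP1]
      ring
    · rw [if_neg (Nat.succ_ne_zero k), Nat.succ_sub_one]
      have h : P (k+1+1) = (X - C (β (k + 1))) * P (k + 1) - C (γ (k + 1)) * P k := hPrec k
      linear_combination -h
  have hβ : ∀ n, u (X * P n * P n) = β n * u (P n * P n) := by
    intro n
    rw [hX n, add_mul, add_mul, map_add, map_add, mul_assoc, huC,
      horth (n+1) n (by omega)]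
    rcases n with _ | k
    · simp
    · rw [if_neg (Nat.succ_ne_zero k), Nat.succ_sub_one, mul_assoc, huC,
        horth k (k+1) (by omega)]
      ring
  have hXP : ∀ n, u (X * P n * P (n+1)) = u (P (n+1) * P (n+1)) := by
    intro n
    rw [hX n, add_mul, add_mul, map_add, map_add, mul_assoc, huC,
      horth n (n+1) (by omega)]
    rcases n with _ | k
    · simp
    · rw [if_neg (Nat.succ_ne_zero k), Nat.succ_sub_one, mul_assoc, huC,
        horth k (k+2) (by omega)]
      ring
  have hγ : ∀ n, u (P (n+1) * P (n+1)) = γ (n+1) * u (P n * P n) := by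
    intro n
    have h0 : u (P (n+2) * P n) = 0 := horth _ _ (by omega)
    rw [hPrec n] at h0
    have e : ((X - C (β (n+1))) * P (n+1) - C (γ (n+1)) * P n) * P n
        = X * P n * P (n+1) - C (β (n+1)) * (P (n+1) * P n) - C (γ (n+1)) * (P n * P n) := by
      ring
    rw [e, map_sub, map_sub, huC, huC, horth (n+1) n (by omega), hXP n] at h0
    linear_combination h0
  have hγnz : ∀ n : ℕ, γ (n+1) ≠ 0 := by
    intro n hz
    exact hnz (n+1) (by rw [hγ n, hz, zero_mul])
  have keyk : ∀ n k : ℕ, k < n → u (φ * derivative (P n) * P k)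
      = -(((k:ℂ)) * a + p) * u (P (k+1) * P n) := by
    intro n k hkn
    have hprod := hPe (P n * P k)
    rw [derivative_mul] at hprod
    have e1 : φ * (derivative (P n) * P k + P n * derivative (P k))
        = φ * derivative (P n) * P k + φ * derivative (P k) * P n := by ring
    have e2 : ψ * (P n * P k) = ψ * P k * P n := by ring
    rw [e1, e2, map_add] at hprod
    have h1 : u (φ * derivative (P k) * P n) = ((k:ℂ)*a) * u (P (k+1) * P n) := by
      have e3 : φ * derivative (P k) * P n
          = (φ * derivative (P k) - C ((k:ℂ)*a) * P (k+1)) * P n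
            + C ((k:ℂ)*a) * (P (k+1) * P n) := by ring
      rw [e3, map_add, huC,
        orth_low u P hm hd horth k n _ (L1 a b c φ hφ P hm hd hP0 k) hkn, zero_add]
    have h2 : u (ψ * P k * P n) = p * u (P (k+1) * P n) := by
      have e4 : ψ * P k * P n
          = (ψ * P k - C p * P (k+1)) * P n + C p * (P (k+1) * P n) := by ring
      rw [e4, map_add, huC,
        orth_low u P hm hd horth k n _ (L2 p q ψ hψ P hm hd k) hkn, zero_add]
    rw [h1, h2] at hprod
    linear_combination hprod
  have keytop : ∀ n : ℕ, u (φ * derivative (P n) * P (n+1))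
      = ((n:ℂ)*a) * u (P (n+1) * P (n+1)) := by
    intro n
    have e3 : φ * derivative (P n) * P (n+1)
        = (φ * derivative (P n) - C ((n:ℂ)*a) * P (n+1)) * P (n+1)
          + C ((n:ℂ)*a) * (P (n+1) * P (n+1)) := by ring
    rw [e3, map_add, huC,
      orth_low u P hm hd horth n (n+1) _ (L1 a b c φ hφ P hm hd hP0 n) (by omega), zero_add]
  have keyn : ∀ n : ℕ, 2 * u (φ * derivative (P n) * P n)
      = -(p * β n + q) * u (P n * P n) := by
    intro n
    have hprod := hPe (P n * P n)
    rw [derivative_mul] at hprod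
    have e1 : φ * (derivative (P n) * P n + P n * derivative (P n))
        = φ * derivative (P n) * P n + φ * derivative (P n) * P n := by ring
    have e2 : ψ * (P n * P n) = C p * (X * P n * P n) + C q * (P n * P n) := by
      rw [hψ]; ring
    rw [e1, e2, map_add, map_add, huC, huC, hβ n] at hprod
    linear_combination hprod
  have hψev : ∀ t : ℂ, ψ.eval t = p * t + q := by intro t; rw [hψ]; simp
  constructor
  · intro n
    rcases n with _ | m
    · -- n = 0
      have h1 := hPe 1
      rw [derivative_one, mul_zero, map_zero, mul_one] at h1
      have e2 : ψ = C p * (X * P 0 * P 0) + C q * (P 0 * P 0) := by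
        rw [hψ, hP0]; ring
      rw [e2, map_add, huC, huC, hβ 0] at h1
      have hb0 : p * β 0 + q = 0 := by
        have h3 : (p * β 0 + q) * u (P 0 * P 0) = 0 := by linear_combination h1
        exact (mul_eq_zero.mp h3).resolve_right (hnz 0)
      rw [hP0, derivative_one, mul_zero, if_pos rfl, hψev, hb0]
      simp
    · -- n = m + 1
      show φ * derivative (P (m+1)) = C ((↑(m+1) : ℂ) * a) * P (m+2)
        + C (-(ψ.eval (β (m+1))) / 2) * P (m+1)
        + C (-((((↑(m+1) : ℂ) - 1) * a + p) * γ (m+1))) * P m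
      set R : ℂ[X] := φ * derivative (P (m+1))
        - (C ((↑(m+1) : ℂ) * a) * P (m+2) + C (-(ψ.eval (β (m+1))) / 2) * P (m+1)
          + C (-((((↑(m+1) : ℂ) - 1) * a + p) * γ (m+1))) * P m) with hR
      have hRdeg : R.degree ≤ ((m + 2 : ℕ) : WithBot ℕ) := by
        have e : R = (φ * derivative (P (m+1)) - C ((↑(m+1) : ℂ) * a) * P (m+2))
            + (-(-(ψ.eval (β (m+1))) / 2)) • P (m+1)
            + (-(-((((↑(m+1) : ℂ) - 1) * a + p) * γ (m+1)))) • P m := by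
          rw [hR]; simp only [Polynomial.smul_eq_C_mul, map_neg]; ring
        rw [e]
        refine le_trans (degree_add_le _ _)
          (max_le (le_trans (degree_add_le _ _) (max_le ?_ ?_)) ?_)
        · exact le_trans (L1 a b c φ hφ P hm hd hP0 (m+1))
            (by exact_mod_cast (show m + 1 ≤ m + 2 by omega))
        · refine le_trans (degree_smul_le _ _) ?_
          rw [Polynomial.degree_eq_natDegree (hm (m+1)).ne_zero, hd (m+1)]
          exact_mod_cast (show m + 1 ≤ m + 2 by omega)
        · refine le_trans (degree_smul_le _ _) ?_
          rw [Polynomial.degree_eq_natDegree (hm m).ne_zero, hd m]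
          exact_mod_cast (show m ≤ m + 2 by omega)
      have hRorth : ∀ k, k ≤ m + 2 → u (R * P k) = 0 := by
        intro k hk
        have eR : R * P k = φ * derivative (P (m+1)) * P k
            - C ((↑(m+1) : ℂ) * a) * (P (m+2) * P k)
            - C (-(ψ.eval (β (m+1))) / 2) * (P (m+1) * P k)
            - C (-((((↑(m+1) : ℂ) - 1) * a + p) * γ (m+1))) * (P m * P k) := by
          rw [hR]; ring
        rw [eR, map_sub, map_sub, map_sub, huC, huC, huC]
        rcases Nat.lt_or_ge k m with hkm | hkm
        · rw [keyk (m+1) k (by omega), horth (k+1) (m+1) (by omega),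
            horth (m+2) k (by omega), horth (m+1) k (by omega), horth m k (by omega)]
          ring
        · rcases Nat.eq_or_lt_of_le hkm with hkm2 | hkm2
          · -- k = m
            rw [← hkm2]
            rw [keyk (m+1) m (by omega), horth (m+2) m (by omega),
              horth (m+1) m (by omega), hγ m]
            push_cast
            ring
          · rcases Nat.eq_or_lt_of_le hkm2 with hkm3 | hkm3
            · -- k = m+1
              rw [show k = m + 1 by omega]
              rw [horth (m+2) (m+1) (by omega), horth m (m+1) (by omega), hψev]
              have h2 := keyn (m+1)
              linear_combination h2 / 2
            · -- k = m+2
              rw [show k = m + 2 by omega]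
              have h3 : u (φ * derivative (P (m+1)) * P (m+2))
                  = ((↑(m+1) : ℂ)) * a * u (P (m+2) * P (m+2)) := keytop (m+1)
              rw [h3, horth (m+1) (m+2) (by omega), horth m (m+2) (by omega)]
              push_cast
              ring
      have hR0 : R = 0 := eq_zero_of_orth u P hm hd horth hnz (m+2) R hRdeg hRorth
      rw [hR] at hR0
      linear_combination hR0
  · intro n hn
    rcases n with _ | m
    · omega
    · have h1 : (((m+1 : ℕ) : ℂ) - 1) * a + p ≠ 0 := by
        have h2 := hadm m
        intro hz
        apply h2
        rw [← hz]; push_cast; ring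
      exact neg_ne_zero.mpr (mul_ne_zero h1 (hγnz m))
end

section
/- Let u be a regular functional on ℂ[x] with monic OPS (P_n)_{n≥0}, and suppose there exist a polynomial φ of degree ≤ 2 and, for each n ≥ 0, scalars a_n, b_n, c_n with c_n ≠ 0 for n ≥ 1, such that φ(x) P_n′(x) = a_n P_{n+1}(x) + b_n P_n(x) + c_n P_{n−1}(x) for all n ≥ 0. Then the sequence of normalized derivatives Q_n(x) = P_{n+1}′(x)/(n+1) is a monic OPS with respect to the functional φu. -/
open Polynomial

/-- if `u` is regular with monic OPS `(P n)` and there are `φ` of degree ≤ 2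
and scalars `a_n, b_n, c_n` with `c_n ≠ 0` for `n ≥ 1` such that
`φ P_n′ = a_n P_{n+1} + b_n P_n + c_n P_{n−1}` for all `n`, then
`Q_n = P_{n+1}′/(n+1)` is a monic OPS with respect to `φu`. -/
theorem stmt16 (u : ℂ[X] →ₗ[ℂ] ℂ) (P : ℕ → ℂ[X]) (hOPS : IsMonicOPS u P)
    (φ : ℂ[X]) (hφdeg : φ.degree ≤ 2)
    (A B Cs : ℕ → ℂ) (hc : ∀ n : ℕ, 1 ≤ n → Cs n ≠ 0)
    (hstruct : ∀ n : ℕ, φ * Polynomial.derivative (P n) =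
      C (A n) * P (n + 1) + C (B n) * P n +
        (if n = 0 then 0 else C (Cs n) * P (n - 1)))
    (Q : ℕ → ℂ[X])
    (hQ : ∀ n, Q n = C (((n : ℂ) + 1)⁻¹) * Polynomial.derivative (P (n + 1))) :
    IsMonicOPS (pmul φ u) Q := by
  obtain ⟨hmon, hdeg, horth, hnz⟩ := hOPS
  have huC : ∀ (a : ℂ) (p : ℂ[X]), u (C a * p) = a * u p := by
    intro a p
    rw [← smul_eq_C_mul, map_smul, smul_eq_mul]
  have hP0 : P 0 = 1 := by
    have h1 := eq_C_of_natDegree_le_zero (le_of_eq (hdeg 0))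
    have h2 : (P 0).coeff 0 = 1 := by
      have := (hmon 0).leadingCoeff
      rwa [leadingCoeff, hdeg 0] at this
    rw [h1, h2, map_one]
  -- key orthogonality to lower degree
  have auxN : ∀ d : ℕ, ∀ q : ℂ[X], q.natDegree ≤ d → ∀ k : ℕ, d < k → u (P k * q) = 0 := by
    intro d
    induction d with
    | zero =>
      intro q hq k hk
      rw [eq_C_of_natDegree_le_zero hq, mul_comm, huC]
      have : u (P k * P 0) = 0 := horth k 0 (by omega)
      rw [hP0, mul_one] at this
      rw [this, mul_zero]
    | succ d ih =>
      intro q hq k hk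
      set r : ℂ[X] := q - C (q.coeff (d + 1)) * P (d + 1) with hr
      have hrd : r.natDegree ≤ d := by
        rw [natDegree_le_iff_coeff_eq_zero]
        intro N hN
        have hqN : ∀ M, d + 1 < M → q.coeff M = 0 :=
          natDegree_le_iff_coeff_eq_zero.mp hq
        rcases eq_or_lt_of_le (Nat.succ_le_of_lt hN) with h | h
        · have hPc : (P (d + 1)).coeff (d + 1) = 1 := by
            have := (hmon (d + 1)).leadingCoeff
            rwa [leadingCoeff, hdeg (d + 1)] at this
          simp [hr, ← h, coeff_C_mul, hPc]
        · have hPc : (P (d + 1)).coeff N = 0 := by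
            apply coeff_eq_zero_of_natDegree_lt
            rw [hdeg]; omega
          simp [hr, hqN N h, coeff_C_mul, hPc]
      have hsplit : P k * q = P k * r + C (q.coeff (d + 1)) * (P k * P (d + 1)) := by
        rw [hr]; ring
      rw [hsplit, map_add, huC, ih r hrd k (by omega),
        horth k (d + 1) (by omega), mul_zero, add_zero]
  have auxD : ∀ q : ℂ[X], ∀ k : ℕ, q.degree < (k : ℕ) → u (P k * q) = 0 := by
    intro q k hk
    rcases eq_or_ne q 0 with rfl | hq0
    · simp
    · exact auxN q.natDegree q le_rfl k ((natDegree_lt_iff_degree_lt hq0).mpr hk)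
  -- Q n is monic of degree n
  have hQcoeff : ∀ n : ℕ, (Q n).coeff n = 1 := by
    intro n
    have hPc : (P (n + 1)).coeff (n + 1) = 1 := by
      have := (hmon (n + 1)).leadingCoeff
      rwa [leadingCoeff, hdeg (n + 1)] at this
    rw [hQ, coeff_C_mul, coeff_derivative, hPc]
    field_simp
  have hQle : ∀ n : ℕ, (Q n).natDegree ≤ n := by
    intro n
    rw [hQ]
    refine le_trans (natDegree_C_mul_le _ _) (le_trans (natDegree_derivative_le _) ?_)
    rw [hdeg]; omega
  have hQmon : ∀ n, (Q n).Monic := fun n =>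
    monic_of_natDegree_le_of_coeff_eq_one n (hQle n) (hQcoeff n)
  have hQdeg : ∀ n, (Q n).natDegree = n := by
    intro n
    refine le_antisymm (hQle n) (le_natDegree_of_ne_zero ?_)
    rw [hQcoeff n]; exact one_ne_zero
  -- key expansion
  have hkey : ∀ m n : ℕ, u (φ * (Q m * Q n)) =
      ((m : ℂ) + 1)⁻¹ * (A (m + 1) * u (P (m + 2) * Q n) +
        B (m + 1) * u (P (m + 1) * Q n) + Cs (m + 1) * u (P m * Q n)) := by
    intro m n
    have h := hstruct (m + 1)
    rw [if_neg (Nat.succ_ne_zero m), Nat.add_sub_cancel] at h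
    have expand : φ * (Q m * Q n) =
        C (((m : ℂ) + 1)⁻¹) * (C (A (m + 1)) * (P (m + 1 + 1) * Q n) +
          (C (B (m + 1)) * (P (m + 1) * Q n) + C (Cs (m + 1)) * (P m * Q n))) := by
      have : φ * (Q m * Q n) =
          C (((m : ℂ) + 1)⁻¹) * ((φ * Polynomial.derivative (P (m + 1))) * Q n) := by
        rw [hQ m]; ring
      rw [this, h]; ring
    rw [expand]
    simp only [map_add, huC]
    ring_nf
  have hpmul : ∀ p : ℂ[X], (pmul φ u) p = u (φ * p) := fun p => rfl
  -- off-diagonal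
  have horthQ : ∀ m n : ℕ, n < m → (pmul φ u) (Q m * Q n) = 0 := by
    intro m n hmn
    rw [hpmul, hkey]
    rw [auxN n (Q n) (le_of_eq (hQdeg n)) (m + 2) (by omega),
      auxN n (Q n) (le_of_eq (hQdeg n)) (m + 1) (by omega),
      auxN n (Q n) (le_of_eq (hQdeg n)) m hmn]
    ring
  refine ⟨hQmon, hQdeg, ?_, ?_⟩
  · intro m n hmn
    rcases lt_or_gt_of_ne hmn with h | h
    · rw [mul_comm]; exact horthQ n m h
    · exact horthQ m n h
  · intro n
    rw [hpmul, hkey]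
    rw [auxN n (Q n) (le_of_eq (hQdeg n)) (n + 2) (by omega),
      auxN n (Q n) (le_of_eq (hQdeg n)) (n + 1) (by omega)]
    have hPQ : u (P n * Q n) = u (P n * P n) := by
      have hd : u (P n * (Q n - P n)) = 0 := by
        apply auxD
        rcases eq_or_ne (Q n) (P n) with h | h
        · rw [h, sub_self, degree_zero]
          exact WithBot.bot_lt_coe n
        · have hdQ : (Q n).degree = (n : ℕ) := by
            rw [degree_eq_natDegree (hQmon n).ne_zero, hQdeg n]
          have hdP : (P n).degree = (n : ℕ) := by
            rw [degree_eq_natDegree (hmon n).ne_zero, hdeg n]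
          have hlt := degree_sub_lt (hdQ.trans hdP.symm) (hQmon n).ne_zero
            (by rw [(hQmon n).leadingCoeff, (hmon n).leadingCoeff])
          rwa [hdQ] at hlt
      have : u (P n * Q n) = u (P n * (Q n - P n)) + u (P n * P n) := by
        rw [← map_add]; congr 1; ring
      rw [this, hd, zero_add]
    rw [hPQ]
    simp only [mul_zero, zero_mul, zero_add, add_zero]
    apply mul_ne_zero
    · exact inv_ne_zero (Nat.cast_add_one_ne_zero n)
    · exact mul_ne_zero (hc (n + 1) (by omega)) (hnz n)
end

section
/- Let u be a regular functional on ℂ[x] with monic OPS (P_n)_{n≥0}. Then u is classical if and only if there exist polynomials φ, ψ and complex numbers λ_n with λ_n ≠ 0 for every n ≥ 1, such that each y = P_n satisfies the second-order differential equation (Bochner) φ(x)·y″ + ψ(x)·y′ + λ_n·y = 0 for all n ≥ 0. Moreover, in that case φ and ψ may be taken with deg φ ≤ 2, deg ψ = 1, D(φu) = ψu, and, writing φ(x) = ax² + bx + c and ψ(x) = px + q, the eigenvalues are λ_n = −n((n−1)a + p). -/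
open Polynomial

section AuxBochner

lemma mem_span_aux (R : ℕ → ℂ[X]) (hd : ∀ n, (R n).natDegree = n) (h0 : ∀ n, R n ≠ 0) :
    ∀ N (q : ℂ[X]), q.natDegree ≤ N → q ∈ Submodule.span ℂ (R '' Set.Iic N) := by
  intro N
  induction N with
  | zero =>
    intro q hq
    set e := (R 0).coeff 0 with he'
    have hR0 : R 0 = C e := eq_C_of_natDegree_le_zero (by rw [hd 0])
    have he : e ≠ 0 := by
      intro h; apply h0 0; rw [hR0, h, map_zero]
    have : q = (q.coeff 0 * e⁻¹) • R 0 := by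
      rw [hR0, smul_C, smul_eq_mul, mul_assoc, inv_mul_cancel₀ he, mul_one]
      exact eq_C_of_natDegree_le_zero hq
    rw [this]
    exact Submodule.smul_mem _ _ (Submodule.subset_span ⟨0, Set.mem_Iic.2 le_rfl, rfl⟩)
  | succ N ih =>
    intro q hq
    by_cases hq' : q.natDegree ≤ N
    · exact Submodule.span_mono (Set.image_mono (Set.Iic_subset_Iic.2 (by omega))) (ih q hq')
    · have hdq : q.natDegree = N + 1 := by omega
      have hqne : q ≠ 0 := by
        intro h; rw [h, natDegree_zero] at hdq; omega
      set c : ℂ := q.leadingCoeff * ((R (N+1)).leadingCoeff)⁻¹ with hc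
      have hlcR : (R (N+1)).leadingCoeff ≠ 0 := leadingCoeff_ne_zero.2 (h0 _)
      have hcne : c ≠ 0 := mul_ne_zero (leadingCoeff_ne_zero.2 hqne) (inv_ne_zero hlcR)
      have hdeg : (c • R (N+1)).degree = q.degree := by
        rw [smul_eq_C_mul, degree_C_mul hcne, degree_eq_natDegree (h0 _),
          degree_eq_natDegree hqne, hd, hdq]
      have hlc : q.leadingCoeff = (c • R (N+1)).leadingCoeff := by
        rw [smul_eq_C_mul, leadingCoeff_mul, leadingCoeff_C, hc,
          mul_assoc, inv_mul_cancel₀ hlcR, mul_one]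
      have hsub : (q - c • R (N+1)).natDegree ≤ N := by
        rcases eq_or_ne (q - c • R (N+1)) 0 with h | h
        · rw [h, natDegree_zero]; omega
        · have := degree_sub_lt hdeg.symm hqne hlc
          have := natDegree_lt_natDegree h this
          omega
      have : q = (q - c • R (N+1)) + c • R (N+1) := by ring
      rw [this]
      exact Submodule.add_mem _
        (Submodule.span_mono (Set.image_mono (Set.Iic_subset_Iic.2 (by omega))) (ih _ hsub))
        (Submodule.smul_mem _ _ (Submodule.subset_span ⟨N+1, Set.mem_Iic.2 le_rfl, rfl⟩))

lemma mem_span_range (R : ℕ → ℂ[X]) (hd : ∀ n, (R n).natDegree = n) (h0 : ∀ n, R n ≠ 0)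
    (q : ℂ[X]) : q ∈ Submodule.span ℂ (Set.range R) := by
  refine Submodule.span_mono ?_ (mem_span_aux R hd h0 q.natDegree q le_rfl)
  rintro x ⟨k, -, rfl⟩; exact ⟨k, rfl⟩

lemma vanish_of_vanish (w : ℂ[X] →ₗ[ℂ] ℂ) (R : ℕ → ℂ[X]) (hd : ∀ n, (R n).natDegree = n)
    (h0 : ∀ n, R n ≠ 0) (hw : ∀ n, w (R n) = 0) (q : ℂ[X]) : w q = 0 := by
  have : Submodule.span ℂ (Set.range R) ≤ LinearMap.ker w := by
    rw [Submodule.span_le]; rintro x ⟨n, rfl⟩; exact hw n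
  exact this (mem_span_range R hd h0 q)


lemma hkey (u : ℂ[X] →ₗ[ℂ] ℂ) (φ ψ : ℂ[X]) (hu : fder (pmul φ u) = pmul ψ u) (p : ℂ[X]) :
    u (φ * derivative p) = - u (ψ * p) := by
  have := LinearMap.congr_fun hu p
  simp [fder, pmul, LinearMap.mulLeft_apply] at this
  linear_combination -this

lemma sym_id (u : ℂ[X] →ₗ[ℂ] ℂ) (φ ψ : ℂ[X]) (hu : fder (pmul φ u) = pmul ψ u) (f g : ℂ[X]) :
    u ((φ * derivative (derivative f) + ψ * derivative f) * g) =
      - u (φ * (derivative f * derivative g)) := by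
  have hk := hkey u φ ψ hu (derivative f * g)
  have e1 : (φ * derivative (derivative f) + ψ * derivative f) * g =
      φ * (derivative (derivative f) * g) + ψ * (derivative f * g) := by ring
  have e2 : φ * derivative (derivative f * g) =
      φ * (derivative (derivative f) * g) + φ * (derivative f * derivative g) := by
    rw [derivative_mul]; ring
  rw [e2, map_add] at hk
  rw [e1, map_add]
  linear_combination hk

lemma rep2 (φ : ℂ[X]) (h : φ.degree ≤ 2) :
    φ = C (φ.coeff 2) * X ^ 2 + C (φ.coeff 1) * X + C (φ.coeff 0) := by
  have h' : φ.natDegree ≤ 2 := natDegree_le_iff_degree_le.mpr h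
  ext k
  rcases k with _|_|_|k
  · simp
  · simp
  · simp
  · rw [coeff_eq_zero_of_natDegree_lt (lt_of_le_of_lt h' (by omega))]
    simp [coeff_X_pow]

lemma rep1 (ψ : ℂ[X]) (h : ψ.degree ≤ 1) :
    ψ = C (ψ.coeff 1) * X + C (ψ.coeff 0) := by
  have h' : ψ.natDegree ≤ 1 := natDegree_le_iff_degree_le.mpr h
  ext k
  rcases k with _|_|k
  · simp
  · simp
  · rw [coeff_eq_zero_of_natDegree_lt (lt_of_le_of_lt h' (by omega))]
    simp


lemma coeff_s_eq_zero (φ ψ : ℂ[X]) (hφ : φ.degree ≤ 2) (hψ : ψ.degree ≤ 1)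
    (Pn : ℂ[X]) (n : ℕ) (hmon : Pn.Monic) (hdeg : Pn.natDegree = n) (k : ℕ) (hk : n ≤ k) :
    (φ * derivative (derivative Pn) + ψ * derivative Pn +
      C (-(n : ℂ) * (((n : ℂ) - 1) * φ.coeff 2 + ψ.coeff 1)) * Pn).coeff k = 0 := by
  set a := φ.coeff 2 with ha
  set b := φ.coeff 1 with hb
  set c := φ.coeff 0 with hc
  set p := ψ.coeff 1 with hp
  set q := ψ.coeff 0 with hq
  set lam : ℂ := -(n : ℂ) * (((n : ℂ) - 1) * a + p) with hlam
  have hφr : φ = C a * X ^ 2 + C b * X + C c := rep2 φ hφ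
  have hψr : ψ = C p * X + C q := rep1 ψ hψ
  set Q := derivative (derivative Pn) with hQdef
  set D1 := derivative Pn with hD1def
  have hQ : ∀ j, Q.coeff j = Pn.coeff (j+2) * (((j:ℂ)+2) * ((j:ℂ)+1)) := by
    intro j
    rw [hQdef, coeff_derivative, hD1def, coeff_derivative]
    push_cast; ring
  have hD : ∀ j, D1.coeff j = Pn.coeff (j+1) * ((j:ℂ)+1) := by
    intro j; rw [hD1def, coeff_derivative]
  have hz : ∀ j, n < j → Pn.coeff j = 0 := fun j hj =>
    coeff_eq_zero_of_natDegree_lt (by omega)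
  have h1n : Pn.coeff n = 1 := hdeg ▸ hmon.coeff_natDegree
  have expand : φ * Q + ψ * D1 + C lam * Pn =
      C a * (Q * X ^ 2) + C b * (Q * X ^ 1) + C c * Q + C p * (D1 * X ^ 1) + C q * D1 +
        C lam * Pn := by
    rw [hφr, hψr]; ring
  rw [expand]
  simp only [coeff_add, coeff_C_mul, coeff_mul_X_pow']
  match k, hk with
  | 0, hk =>
    have hn0 : n = 0 := by omega
    subst hn0
    simp [hQ, hD, hz 1 (by omega), hz 2 (by omega), hlam]
  | 1, hk =>
    simp only [show ¬(2 ≤ 1) by omega, show 1 ≤ 1 by omega, if_true, if_false]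
    norm_num
    rw [hQ, hQ, hD, hD]
    rw [hz 2 (by omega), hz 3 (by omega)]
    interval_cases n
    · rw [hz 1 (by omega)]; ring
    · rw [show Pn.coeff 1 = 1 from h1n, hlam]; push_cast; ring
  | (k+2), hk =>
    simp only [show 2 ≤ k + 2 by omega, show 1 ≤ k + 2 by omega, if_true]
    norm_num
    rw [hQ, hQ, hQ, hD, hD]
    rw [hz (k+3) (by omega), hz (k+4) (by omega)]
    rw [show k + 1 + 1 = k + 2 by omega]
    rcases eq_or_lt_of_le hk with he | hlt
    · rw [he] at h1n
      rw [h1n, hlam, he]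
      push_cast
      ring
    · rw [hz (k+2) hlt]
      ring


section A2
variable (u : ℂ[X] →ₗ[ℂ] ℂ) (P : ℕ → ℂ[X]) (h1 : ∀ n, (P n).Monic)
  (h2 : ∀ n, (P n).natDegree = n) (h3 : ∀ m n : ℕ, m ≠ n → u (P m * P n) = 0)
  (h4 : ∀ n, u (P n * P n) ≠ 0)

include h1 h2 h3 in
lemma orth_low_s18 (r : ℂ[X]) (n : ℕ) (h : r.natDegree < n) : u (r * P n) = 0 := by
  have hr : r ∈ Submodule.span ℂ (P '' Set.Iic r.natDegree) :=
    mem_span_aux P h2 (fun k => (h1 k).ne_zero) r.natDegree r le_rfl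
  have hker : Submodule.span ℂ (P '' Set.Iic r.natDegree) ≤
      LinearMap.ker (u ∘ₗ LinearMap.mulRight ℂ (P n)) := by
    rw [Submodule.span_le]
    rintro x ⟨k, hk, rfl⟩
    have : k ≠ n := by have := Set.mem_Iic.1 hk; omega
    simpa using h3 k n this
  simpa using hker hr

include h1 h2 h3 h4 in
lemma eq_zero_of_orth_s18 (r : ℂ[X]) (h : ∀ m, u (r * P m) = 0) : r = 0 := by
  by_contra hr
  set d := r.natDegree with hdd
  set s := r - r.leadingCoeff • P d with hs
  have hlc : r.leadingCoeff ≠ 0 := leadingCoeff_ne_zero.2 hr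
  have hdeg : (r.leadingCoeff • P d).degree = r.degree := by
    rw [smul_eq_C_mul, degree_C_mul hlc, degree_eq_natDegree (h1 d).ne_zero,
      degree_eq_natDegree hr, h2]
  have hlc2 : r.leadingCoeff = (r.leadingCoeff • P d).leadingCoeff := by
    rw [smul_eq_C_mul, leadingCoeff_mul, leadingCoeff_C, (h1 d).leadingCoeff, mul_one]
  have hsPd : u (s * P d) = 0 := by
    rcases eq_or_ne s 0 with h' | h'
    · rw [h', zero_mul, map_zero]
    · have hlt := degree_sub_lt hdeg.symm hr hlc2
      rw [← hs] at hlt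
      exact orth_low_s18 u P h1 h2 h3 s d (by
        have := natDegree_lt_natDegree h' hlt; omega)
  have hro : r = s + r.leadingCoeff • P d := by rw [hs]; ring
  have : u (r * P d) = r.leadingCoeff * u (P d * P d) := by
    nth_rewrite 1 [hro]
    rw [add_mul, map_add, hsPd, zero_add, smul_mul_assoc, map_smul, smul_eq_mul]
  rw [h d] at this
  exact h4 d (by
    rcases mul_eq_zero.1 this.symm with h' | h'
    · exact absurd h' hlc
    · exact h')

include h1 h2 in
lemma der_natDegree (m : ℕ) : (derivative (P (m+1))).natDegree = m := by
  have hle : (derivative (P (m+1))).natDegree ≤ m := by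
    have := natDegree_derivative_le (P (m+1)); rw [h2] at this; omega
  have hc1 : (P (m+1)).coeff (m+1) = 1 := by
    have := (h1 (m+1)).coeff_natDegree; rwa [h2] at this
  have hco : (derivative (P (m+1))).coeff m ≠ 0 := by
    rw [coeff_derivative, hc1, one_mul]
    exact Nat.cast_add_one_ne_zero m
  exact le_antisymm hle (le_natDegree_of_ne_zero hco)

include h1 h2 in
lemma der_ne_zero (m : ℕ) : derivative (P (m+1)) ≠ 0 := by
  intro h
  have hc1 : (P (m+1)).coeff (m+1) = 1 := by
    have := (h1 (m+1)).coeff_natDegree; rwa [h2] at this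
  have hco : (derivative (P (m+1))).coeff m ≠ 0 := by
    rw [coeff_derivative, hc1, one_mul]
    exact Nat.cast_add_one_ne_zero m
  rw [h] at hco; simp at hco
end A2


section A3
variable (P : ℕ → ℂ[X]) (h1 : ∀ n, (P n).Monic) (h2 : ∀ n, (P n).natDegree = n)

include h1 h2 in
lemma vanish_of_orth_der (w : ℂ[X] →ₗ[ℂ] ℂ)
    (hw : ∀ m, w (derivative (P (m+1))) = 0) (q : ℂ[X]) : w q = 0 :=
  vanish_of_vanish w (fun m => derivative (P (m+1))) (der_natDegree P h1 h2)
    (der_ne_zero P h1 h2) hw q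
end A3

section main
variable (u : ℂ[X] →ₗ[ℂ] ℂ) (P : ℕ → ℂ[X]) (h1 : ∀ n, (P n).Monic)
  (h2 : ∀ n, (P n).natDegree = n) (h3 : ∀ m n : ℕ, m ≠ n → u (P m * P n) = 0)
  (h4 : ∀ n, u (P n * P n) ≠ 0)

include h1 h2 h3 h4 in
lemma bochner_core (φ ψ : ℂ[X]) (hφ : φ.degree ≤ 2) (hψ : ψ.degree = 1)
    (hu : fder (pmul φ u) = pmul ψ u) (n : ℕ) :
    φ * derivative (derivative (P n)) + ψ * derivative (P n) +
      C (-(n : ℂ) * (((n : ℂ) - 1) * φ.coeff 2 + ψ.coeff 1)) * P n = 0 := by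
  set lam : ℂ := -(n : ℂ) * (((n : ℂ) - 1) * φ.coeff 2 + ψ.coeff 1) with hlam
  set s : ℂ[X] := φ * derivative (derivative (P n)) + ψ * derivative (P n) + C lam * P n
    with hs
  have hcoeff : ∀ k, n ≤ k → s.coeff k = 0 := fun k hk =>
    coeff_s_eq_zero φ ψ hφ hψ.le (P n) n (h1 n) (h2 n) k hk
  have hdegs : s = 0 ∨ s.natDegree < n := by
    rcases eq_or_ne s 0 with h | h
    · exact Or.inl h
    · right
      by_contra hc
      push_neg at hc
      exact leadingCoeff_ne_zero.2 h (hcoeff _ hc)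
  have hψnd : ψ.natDegree ≤ 1 := natDegree_le_iff_degree_le.mpr hψ.le
  have hφnd : φ.natDegree ≤ 2 := natDegree_le_iff_degree_le.mpr hφ
  have horth : ∀ m, u (s * P m) = 0 := by
    intro m
    rcases lt_or_ge m n with hm | hm
    · -- m < n : use symmetry
      have e : s * P m =
          (φ * derivative (derivative (P n)) + ψ * derivative (P n)) * P m +
            lam • (P n * P m) := by
        rw [hs, smul_eq_C_mul]; ring
      rw [e, map_add, map_smul, h3 n m (by omega), smul_zero, add_zero]
      rw [sym_id u φ ψ hu (P n) (P m)]
      have e2 : φ * (derivative (P n) * derivative (P m)) =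
          φ * (derivative (P m) * derivative (P n)) := by ring
      rw [e2, ← sym_id u φ ψ hu (P m) (P n)]
      have hLm : (φ * derivative (derivative (P m)) + ψ * derivative (P m)).natDegree < n := by
        rcases m with _ | _ | j
        · have hP0 : P 0 = 1 := (h1 0).natDegree_eq_zero.mp (h2 0)
          rw [hP0]
          simp only [derivative_one, derivative_zero, mul_zero, add_zero, natDegree_zero]
          omega
        · have hP1 : P 1 = X + C ((P 1).coeff 0) := (h1 1).eq_X_add_C (h2 1)
          rw [hP1]
          simp only [derivative_add, derivative_X, derivative_C, add_zero, derivative_one,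
            mul_zero, mul_one, zero_add]
          omega
        · show (φ * derivative (derivative (P (j+2))) + ψ * derivative (P (j+2))).natDegree < n
          have d1 : (derivative (P (j+2))).natDegree ≤ j + 1 := by
            have := natDegree_derivative_le (P (j+2)); rw [h2] at this; omega
          have d2 : (derivative (derivative (P (j+2)))).natDegree ≤ j := by
            have := natDegree_derivative_le (derivative (P (j+2))); omega
          have t1 : (φ * derivative (derivative (P (j+2)))).natDegree ≤ j + 2 := by
            have := natDegree_mul_le (p := φ) (q := derivative (derivative (P (j+2))))
            omega
          have t2 : (ψ * derivative (P (j+2))).natDegree ≤ j + 2 := by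
            have := natDegree_mul_le (p := ψ) (q := derivative (P (j+2)))
            omega
          have := natDegree_add_le (φ * derivative (derivative (P (j+2))))
            (ψ * derivative (P (j+2)))
          omega
      rw [orth_low_s18 u P h1 h2 h3 _ n hLm]
    · -- n ≤ m
      rcases hdegs with h | h
      · rw [h, zero_mul, map_zero]
      · exact orth_low_s18 u P h1 h2 h3 s m (by omega)
  exact eq_zero_of_orth_s18 u P h1 h2 h3 h4 s horth
end main

section main2
variable (u : ℂ[X] →ₗ[ℂ] ℂ) (P : ℕ → ℂ[X]) (h1 : ∀ n, (P n).Monic)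
  (h2 : ∀ n, (P n).natDegree = n) (h3 : ∀ m n : ℕ, m ≠ n → u (P m * P n) = 0)
  (h4 : ∀ n, u (P n * P n) ≠ 0)

include h1 h2 h3 h4 in
lemma lam_ne_zero (φ ψ : ℂ[X]) (hφ : φ.degree ≤ 2) (hψ : ψ.degree = 1)
    (hu : fder (pmul φ u) = pmul ψ u) (N : ℕ) (hN : 1 ≤ N) :
    -(N : ℂ) * (((N : ℂ) - 1) * φ.coeff 2 + ψ.coeff 1) ≠ 0 := by
  intro h0
  have hb := bochner_core u P h1 h2 h3 h4 φ ψ hφ hψ hu N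
  rw [h0, map_zero, zero_mul, add_zero] at hb
  -- now  φ * P_N'' + ψ * P_N' = 0
  have hsym : ∀ m, u (φ * (derivative (P N) * derivative (P m))) = 0 := by
    intro m
    have := sym_id u φ ψ hu (P N) (P m)
    rw [hb, zero_mul, map_zero] at this
    linear_combination this
  set r : ℂ[X] := φ * derivative (P N) with hr
  have hv : ∀ q, u (r * q) = 0 := by
    have := vanish_of_orth_der P h1 h2 (u ∘ₗ LinearMap.mulRight ℂ r) ?_
    · intro q
      have h' := this q
      simp only [LinearMap.comp_apply, LinearMap.mulRight_apply] at h'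
      rwa [mul_comm] at h'
    · intro m
      have e : derivative (P (m+1)) * r = φ * (derivative (P N) * derivative (P (m+1))) := by
        rw [hr]; ring
      simpa [e] using hsym (m+1)
  have hr0 : r = 0 := eq_zero_of_orth_s18 u P h1 h2 h3 h4 r (fun m => hv (P m))
  rcases mul_eq_zero.1 hr0 with hφ0 | hd0
  · -- φ = 0, so coeff 2 = 0 and then ψ.coeff 1 = 0, contradiction
    rw [hφ0] at h0
    simp only [coeff_zero, mul_zero, zero_add] at h0
    have hp : ψ.coeff 1 ≠ 0 := coeff_ne_zero_of_eq_degree hψ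
    have hNne : (N : ℂ) ≠ 0 := Nat.cast_ne_zero.2 (by omega)
    rcases mul_eq_zero.1 h0 with h | h
    · exact hNne (by linear_combination -h)
    · exact hp h
  · obtain ⟨M, rfl⟩ : ∃ M, N = M + 1 := ⟨N - 1, by omega⟩
    exact der_ne_zero P h1 h2 M hd0

include h1 h2 h3 in
lemma converse_dir (φ ψ : ℂ[X]) (lam : ℕ → ℂ) (hlam : ∀ n, 1 ≤ n → lam n ≠ 0)
    (heq : ∀ n, φ * derivative (derivative (P n)) + ψ * derivative (P n) +
      C (lam n) * P n = 0) :
    φ.degree ≤ 2 ∧ ψ.degree = 1 ∧ fder (pmul φ u) = pmul ψ u := by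
  have hP0 : P 0 = 1 := (h1 0).natDegree_eq_zero.mp (h2 0)
  have hP1 : P 1 = X + C ((P 1).coeff 0) := (h1 1).eq_X_add_C (h2 1)
  have hd1 : derivative (P 1) = 1 := by rw [hP1]; simp
  have hψeq : ψ = -(C (lam 1) * P 1) := by
    have := heq 1
    rw [hd1] at this
    simp only [derivative_one, mul_zero, mul_one, zero_add] at this
    linear_combination this
  have hψdeg : ψ.degree = 1 := by
    rw [hψeq, degree_neg, degree_C_mul (hlam 1 le_rfl),
      degree_eq_natDegree (h1 1).ne_zero, h2 1]
    rfl
  -- degree of φ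
  have hd2nd : (derivative (P 2)).natDegree ≤ 1 := by
    have := natDegree_derivative_le (P 2); rw [h2] at this; omega
  have hdd2 : derivative (derivative (P 2)) = C 2 := by
    have hrep : derivative (P 2) = C ((derivative (P 2)).coeff 1) * X +
        C ((derivative (P 2)).coeff 0) :=
      eq_X_add_C_of_degree_le_one (natDegree_le_iff_degree_le.mp hd2nd)
    have hc1 : (derivative (P 2)).coeff 1 = 2 := by
      rw [coeff_derivative]
      have : (P 2).coeff 2 = 1 := by
        have := (h1 2).coeff_natDegree; rwa [h2] at this
      rw [this]; norm_num
    rw [hrep, hc1]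
    simp
  have hφ2 : φ * C (2:ℂ) = -(ψ * derivative (P 2) + C (lam 2) * P 2) := by
    have := heq 2
    rw [hdd2] at this
    linear_combination this
  have hφdeg : φ.degree ≤ 2 := by
    have h2ne : (2:ℂ) ≠ 0 := two_ne_zero
    rw [← degree_mul_C h2ne, hφ2, degree_neg]
    refine le_trans (degree_add_le _ _) (max_le ?_ ?_)
    · refine le_trans (degree_mul_le _ _) ?_
      rw [hψdeg]
      have : (derivative (P 2)).degree ≤ 1 := natDegree_le_iff_degree_le.mp hd2nd
      calc (1 : WithBot ℕ) + (derivative (P 2)).degree ≤ 1 + 1 := by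
            exact add_le_add le_rfl this
        _ = 2 := by rfl
    · refine le_trans (degree_mul_le _ _) ?_
      rw [degree_eq_natDegree (h1 2).ne_zero, h2 2]
      calc (C (lam 2)).degree + ((2:ℕ) : WithBot ℕ) ≤ 0 + 2 := by
            exact add_le_add degree_C_le le_rfl
        _ = 2 := by rfl
  refine ⟨hφdeg, hψdeg, ?_⟩
  have hw : ∀ q, (fder (pmul φ u) - pmul ψ u) q = 0 := by
    apply vanish_of_orth_der P h1 h2
    intro m
    have happ : (fder (pmul φ u) - pmul ψ u) (derivative (P (m+1))) =
        -u (φ * derivative (derivative (P (m+1)))) - u (ψ * derivative (P (m+1))) := by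
      simp [fder, pmul]
    rw [happ]
    have e : φ * derivative (derivative (P (m+1))) + ψ * derivative (P (m+1)) =
        -(C (lam (m+1)) * P (m+1)) := by
      linear_combination heq (m+1)
    have : u (φ * derivative (derivative (P (m+1)))) + u (ψ * derivative (P (m+1))) =
        u (-(C (lam (m+1)) * P (m+1))) := by
      rw [← map_add, e]
    have hup : u (C (lam (m+1)) * P (m+1)) = 0 := by
      rw [← smul_eq_C_mul, map_smul, smul_eq_mul]
      have : u (P (m+1)) = u (P (m+1) * P 0) := by rw [hP0, mul_one]
      rw [this, h3 (m+1) 0 (by omega), mul_zero]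
    rw [map_neg, hup, neg_zero] at this
    linear_combination -this
  exact LinearMap.ext fun q => by
    have := hw q
    rwa [LinearMap.sub_apply, sub_eq_zero] at this
end main2


end AuxBochner


/-- Bochner: a regular functional `u` with monic OPS `(P n)` is classical iff
there exist polynomials `φ, ψ` and scalars `λ_n` (nonzero for `n ≥ 1`) with
`φ P_n″ + ψ P_n′ + λ_n P_n = 0` for all `n`; moreover in that case `φ, ψ` may be taken with
`deg φ ≤ 2`, `deg ψ = 1`, `D(φu) = ψu`, and, writing `φ = ax² + bx + c`, `ψ = px + q`,
the eigenvalues are `λ_n = −n((n−1)a + p)`. -/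


theorem stmt18 (u : ℂ[X] →ₗ[ℂ] ℂ) (P : ℕ → ℂ[X]) (hOPS : IsMonicOPS u P) :
    ((∃ φ ψ : ℂ[X], φ.degree ≤ 2 ∧ ψ.degree = 1 ∧ fder (pmul φ u) = pmul ψ u) ↔
      (∃ (φ ψ : ℂ[X]) (lam : ℕ → ℂ), (∀ n : ℕ, 1 ≤ n → lam n ≠ 0) ∧
        ∀ n : ℕ, φ * Polynomial.derivative (Polynomial.derivative (P n)) +
          ψ * Polynomial.derivative (P n) + C (lam n) * P n = 0)) ∧
    ((∃ φ ψ : ℂ[X], φ.degree ≤ 2 ∧ ψ.degree = 1 ∧ fder (pmul φ u) = pmul ψ u) →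
      ∃ a b c p q : ℂ,
        (C a * X ^ 2 + C b * X + C c : ℂ[X]).degree ≤ 2 ∧
        (C p * X + C q : ℂ[X]).degree = 1 ∧
        fder (pmul (C a * X ^ 2 + C b * X + C c) u) = pmul (C p * X + C q) u ∧
        ∀ n : ℕ,
          (C a * X ^ 2 + C b * X + C c) *
              Polynomial.derivative (Polynomial.derivative (P n)) +
            (C p * X + C q) * Polynomial.derivative (P n) +
            C (-(n : ℂ) * (((n : ℂ) - 1) * a + p)) * P n = 0) := by
  obtain ⟨h1, h2, h3, h4⟩ := hOPS
  constructor
  · constructor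
    · rintro ⟨φ, ψ, hφ, hψ, hu⟩
      exact ⟨φ, ψ, fun n => -(n : ℂ) * (((n : ℂ) - 1) * φ.coeff 2 + ψ.coeff 1),
        fun n hn => lam_ne_zero u P h1 h2 h3 h4 φ ψ hφ hψ hu n hn,
        fun n => bochner_core u P h1 h2 h3 h4 φ ψ hφ hψ hu n⟩
    · rintro ⟨φ, ψ, lam, hlam, heq⟩
      obtain ⟨hφ, hψ, hu⟩ := converse_dir u P h1 h2 h3 φ ψ lam hlam heq
      exact ⟨φ, ψ, hφ, hψ, hu⟩
  · rintro ⟨φ, ψ, hφ, hψ, hu⟩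
    refine ⟨φ.coeff 2, φ.coeff 1, φ.coeff 0, ψ.coeff 1, ψ.coeff 0, ?_, ?_, ?_, ?_⟩
    · rw [← rep2 φ hφ]; exact hφ
    · rw [← rep1 ψ hψ.le]; exact hψ
    · rw [← rep2 φ hφ, ← rep1 ψ hψ.le]; exact hu
    · intro n
      rw [← rep2 φ hφ, ← rep1 ψ hψ.le]
      exact bochner_core u P h1 h2 h3 h4 φ ψ hφ hψ hu n
end

section
/- Let u be a regular functional on ℂ[x] satisfying D(φu) = ψu, where (φ,ψ) is an admissible pair with φ(x) = ax² + bx + c, ψ(x) = px + q, and let (P_n)_{n≥0} be the monic OPS of u with three-term recurrence coefficients β_n, γ_n. Then for every n ≥ 1 the McCarthy relation holds: φ·(P_n P_{n−1})′ = h_n P_n² − (ψ − φ′) P_n P_{n−1} + t_n P_{n−1}², where h_n = (2n−3)a + p and t_n = −((2n−1)a + p)·γ_n. -/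
open Polynomial

/-- McCarthy: if `u` is regular with monic OPS `(P n)` having TTRR
coefficients `β, γ`, and `u` satisfies `D(φu) = ψu` for an admissible pair `(φ, ψ)` with
`φ = ax² + bx + c`, `ψ = px + q`, then for every `n ≥ 1`
`φ (P_n P_{n−1})′ = h_n P_n² − (ψ − φ′) P_n P_{n−1} + t_n P_{n−1}²` with
`h_n = (2n−3)a + p` and `t_n = −((2n−1)a + p)γ_n`. -/
theorem stmt19 (u : ℂ[X] →ₗ[ℂ] ℂ) (a b c p q : ℂ) (φ ψ : ℂ[X])
    (hφ : φ = C a * X ^ 2 + C b * X + C c) (hψ : ψ = C p * X + C q)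
    (hadm : ∀ n : ℕ, (n : ℂ) * a + p ≠ 0)
    (P : ℕ → ℂ[X]) (β γ : ℕ → ℂ) (hOPS : IsMonicOPS u P)
    (hP0 : P 0 = 1) (hP1 : P 1 = X - C (β 0))
    (hPrec : ∀ n : ℕ, P (n + 2) = (X - C (β (n + 1))) * P (n + 1) - C (γ (n + 1)) * P n)
    (hPearson : fder (pmul φ u) = pmul ψ u) :
    ∀ n : ℕ, 1 ≤ n →
      φ * Polynomial.derivative (P n * P (n - 1)) =
        C ((2 * (n : ℂ) - 3) * a + p) * P n ^ 2 -
          (ψ - Polynomial.derivative φ) * (P n * P (n - 1)) +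
          C (-((2 * (n : ℂ) - 1) * a + p) * γ n) * P (n - 1) ^ 2 := by
  obtain ⟨hmon, hdeg, huP, hu2⟩ := hOPS
  have hcoe : ∀ n, (P n).coeff n = 1 := fun n => by
    have h := (hmon n).coeff_natDegree; rwa [hdeg n] at h
  have hcoe0 : ∀ n k, n < k → (P n).coeff k = 0 := fun n k h =>
    coeff_eq_zero_of_natDegree_lt (by rw [hdeg]; exact h)
  have hC : ∀ (r : ℂ) (f : ℂ[X]), u (C r * f) = r * u f := fun r f => by
    rw [← smul_eq_C_mul, map_smul, smul_eq_mul]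
  have aux : ∀ d (R : ℂ[X]) (n : ℕ), R.natDegree ≤ d → d < n → u (P n * R) = 0 := by
    intro d
    induction d with
    | zero =>
      intro R n hR hn
      rw [eq_C_of_natDegree_le_zero hR, mul_comm, hC]
      have h := huP 0 n (by omega)
      rw [hP0, one_mul] at h
      rw [h, mul_zero]
    | succ d ih =>
      intro R n hR hn
      have h1 : (R - C (R.coeff (d+1)) * P (d+1)).natDegree ≤ d := by
        rw [natDegree_le_iff_coeff_eq_zero]
        intro N hN
        rcases eq_or_lt_of_le (Nat.succ_le_of_lt hN) with h | h
        · rw [coeff_sub, coeff_C_mul, ← h, hcoe (d+1), mul_one, sub_self]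
        · rw [coeff_sub, coeff_C_mul, hcoe0 (d+1) N h,
            coeff_eq_zero_of_natDegree_lt (lt_of_le_of_lt hR h), mul_zero, sub_self]
      have e : P n * R = P n * (R - C (R.coeff (d+1)) * P (d+1))
          + C (R.coeff (d+1)) * (P n * P (d+1)) := by ring
      rw [e, map_add, hC, ih _ n h1 (by omega), huP n (d+1) (by omega), mul_zero, add_zero]
  have ortho2 : ∀ (n : ℕ) (R : ℂ[X]), R.natDegree ≤ n → R.coeff n = 0 → u (P n * R) = 0 := by
    intro n R h1 h2
    rcases lt_or_eq_of_le h1 with h | h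
    · exact aux R.natDegree R n le_rfl h
    · have : R.leadingCoeff = 0 := by rw [leadingCoeff, h, h2]
      rw [leadingCoeff_eq_zero.mp this, mul_zero, map_zero]
  have span : ∀ R : ℂ[X], (∀ k, u (P k * R) = 0) → R = 0 := by
    intro R hR
    by_contra h0
    set d := R.natDegree with hd
    have h1 : (R - C (R.coeff d) * P d).natDegree ≤ d :=
      le_trans (natDegree_sub_le _ _) (by
        simp only [max_le_iff]
        exact ⟨le_rfl, le_trans (natDegree_C_mul_le _ _) (le_of_eq (hdeg d))⟩)
    have h2 : (R - C (R.coeff d) * P d).coeff d = 0 := by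
      rw [coeff_sub, coeff_C_mul, hcoe d, mul_one, sub_self]
    have h3 := ortho2 d _ h1 h2
    have e : P d * R = P d * (R - C (R.coeff d) * P d) + C (R.coeff d) * (P d * P d) := by ring
    have h4 := hR d
    rw [e, map_add, h3, hC, zero_add] at h4
    rcases mul_eq_zero.mp h4 with h | h
    · exact h0 (leadingCoeff_eq_zero.mp h)
    · exact hu2 d h
  have pear : ∀ r : ℂ[X], u (φ * derivative r) = -u (ψ * r) := by
    intro r
    have h := LinearMap.congr_fun hPearson r
    simp only [fder, pmul, LinearMap.neg_apply, LinearMap.comp_apply,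
      LinearMap.mulLeft_apply] at h
    linear_combination -h
  set Qp : ℕ → ℂ[X] := fun m => if m = 0 then 0 else P (m-1) with hQdef
  have hQ0 : Qp 0 = 0 := rfl
  have hQs : ∀ k, Qp (k+1) = P k := fun k => rfl
  have hrec : ∀ m, X * P m = P (m+1) + C (β m) * P m + C (γ m) * Qp m := by
    intro m
    cases m with
    | zero => rw [hQ0, hP0, hP1]; ring
    | succ k => rw [hQs, hPrec k]; ring
  have uQ : ∀ i m, m ≤ i → u (P i * Qp m) = 0 := by
    intro i m h
    cases m with
    | zero => rw [hQ0, mul_zero, map_zero]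
    | succ k => rw [hQs]; exact huP i k (by omega)
  have uQ' : ∀ i m, i + 1 < m → u (P i * Qp m) = 0 := by
    intro i m h
    cases m with
    | zero => omega
    | succ k => rw [hQs]; exact huP i k (by omega)
  -- L1
  have L1 : ∀ m, u (P (m+1) * (X * P m)) = u (P (m+1) * P (m+1)) := by
    intro m
    have hsub : (X * P m - P (m+1)).natDegree ≤ m + 1 :=
      le_trans (natDegree_sub_le _ _) (by
        simp only [max_le_iff]
        constructor
        · exact le_trans (natDegree_mul_le) (by rw [natDegree_X, hdeg]; omega)
        · rw [hdeg])
    have hc : (X * P m - P (m+1)).coeff (m+1) = 0 := by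
      rw [coeff_sub, coeff_X_mul, hcoe, hcoe, sub_self]
    have h0 := ortho2 (m+1) _ hsub hc
    have e : P (m+1) * (X * P m) = P (m+1) * (X * P m - P (m+1)) + P (m+1) * P (m+1) := by ring
    rw [e, map_add, h0, zero_add]
  have L2 : ∀ m, u (P m * (X * P m)) = β m * u (P m * P m) := by
    intro m
    rw [hrec m]
    have e : P m * (P (m+1) + C (β m) * P m + C (γ m) * Qp m)
        = P m * P (m+1) + C (β m) * (P m * P m) + C (γ m) * (P m * Qp m) := by ring
    rw [e, map_add, map_add, hC, hC, huP m (m+1) (by omega), uQ m m le_rfl, mul_zero,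
      add_zero, zero_add]
  have L3 : ∀ m, u (P m * (X * P (m+1))) = γ (m+1) * u (P m * P m) := by
    intro m
    rw [hrec (m+1), hQs]
    have e : P m * (P (m+2) + C (β (m+1)) * P (m+1) + C (γ (m+1)) * P m)
        = P m * P (m+2) + C (β (m+1)) * (P m * P (m+1)) + C (γ (m+1)) * (P m * P m) := by ring
    rw [e, map_add, map_add, hC, hC, huP m (m+2) (by omega), huP m (m+1) (by omega),
      mul_zero, zero_add, zero_add]
  have momγ : ∀ m, u (P (m+1) * P (m+1)) = γ (m+1) * u (P m * P m) := by
    intro m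
    rw [← L1 m, show P (m+1) * (X * P m) = P m * (X * P (m+1)) by ring, L3]
  have Mψ : ∀ m, u (P m * (ψ * P m)) = (p * β m + q) * u (P m * P m) := by
    intro m
    rw [hψ]
    have e : P m * ((C p * X + C q) * P m)
        = C p * (P m * (X * P m)) + C q * (P m * P m) := by ring
    rw [e, map_add, hC, hC, L2]; ring
  have ME : ∀ m, u (P m * (φ * derivative (P m)))
      = -((p * β m + q)/2) * u (P m * P m) := by
    intro m
    have hp := pear (P m * P m)
    rw [derivative_mul] at hp
    rw [show φ * (derivative (P m) * P m + P m * derivative (P m))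
        = P m * (φ * derivative (P m)) + P m * (φ * derivative (P m)) by ring] at hp
    rw [show ψ * (P m * P m) = P m * (ψ * P m) by ring] at hp
    rw [map_add, Mψ m] at hp
    linear_combination hp / 2
  have Ma : ∀ m, u (P (m+1) * (ψ * P m)) = p * u (P (m+1) * P (m+1)) := by
    intro m
    rw [hψ]
    have e : P (m+1) * ((C p * X + C q) * P m)
        = C p * (P (m+1) * (X * P m)) + C q * (P (m+1) * P m) := by ring
    rw [e, map_add, hC, hC, L1, huP (m+1) m (by omega), mul_zero, add_zero]
  have hφd : ∀ k, (φ * derivative (P k)).natDegree ≤ k + 1 := by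
    intro k
    cases k with
    | zero => rw [hP0, derivative_one, mul_zero, natDegree_zero]; omega
    | succ j =>
      refine le_trans natDegree_mul_le ?_
      have h1 : φ.natDegree ≤ 2 := hφ ▸ natDegree_quadratic_le
      have h2 : (derivative (P (j+1))).natDegree ≤ j :=
        le_trans (natDegree_derivative_le _) (by rw [hdeg]; omega)
      omega
  have hψd : ∀ k, (ψ * P k).natDegree ≤ k + 1 := by
    intro k
    refine le_trans natDegree_mul_le ?_
    have h1 : ψ.natDegree ≤ 1 := hψ ▸ natDegree_linear_le
    rw [hdeg]; omega
  have Mtop : ∀ m, u (P (m+1) * (φ * derivative (P m)))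
      = (m:ℂ) * a * u (P (m+1) * P (m+1)) := by
    intro m
    cases m with
    | zero => rw [hP0, derivative_one, mul_zero, mul_zero, map_zero, Nat.cast_zero,
        zero_mul, zero_mul]
    | succ j =>
      set W := φ * derivative (P (j+1)) - C (((j:ℂ)+1) * a) * P (j+2) with hW
      have e : φ * derivative (P (j+1)) = C a * (derivative (P (j+1)) * X^2)
          + C b * (derivative (P (j+1)) * X) + C c * derivative (P (j+1)) := by
        rw [hφ]; ring
      have hcW : W.coeff (j+2) = 0 := by
        rw [hW, coeff_sub, e, coeff_add, coeff_add, coeff_C_mul, coeff_C_mul, coeff_C_mul,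
          coeff_C_mul]
        rw [show (j+2) = j + 2 from rfl, coeff_mul_X_pow]
        rw [show (j+2) = (j+1) + 1 from rfl, coeff_mul_X]
        rw [coeff_derivative, coeff_derivative, coeff_derivative]
        rw [hcoe (j+1), hcoe0 (j+1) (j+1+1) (by omega), hcoe0 (j+1) (j+2+1) (by omega),
          hcoe (j+2)]
        push_cast; ring
      have hdW : W.natDegree ≤ j + 2 := by
        refine le_trans (natDegree_sub_le _ _) ?_
        simp only [max_le_iff]
        exact ⟨le_trans (hφd (j+1)) (by omega),
          le_trans (natDegree_C_mul_le _ _) (le_of_eq (hdeg (j+2)))⟩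
      have h0 := ortho2 (j+2) W hdW hcW
      have e2 : P (j+2) * (φ * derivative (P (j+1)))
          = P (j+2) * W + C (((j:ℂ)+1) * a) * (P (j+2) * P (j+2)) := by rw [hW]; ring
      rw [e2, map_add, h0, hC, zero_add]
      push_cast; ring
  have MD : ∀ j, u (P j * (φ * derivative (P (j+1))))
      = -((j:ℂ) * a + p) * γ (j+1) * u (P j * P j) := by
    intro j
    have hp := pear (P j * P (j+1))
    rw [derivative_mul] at hp
    rw [show φ * (derivative (P j) * P (j+1) + P j * derivative (P (j+1)))
        = P (j+1) * (φ * derivative (P j)) + P j * (φ * derivative (P (j+1))) by ring] at hp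
    rw [show ψ * (P j * P (j+1)) = P (j+1) * (ψ * P j) by ring] at hp
    rw [map_add, Mtop j, Ma j] at hp
    linear_combination hp - ((j:ℂ) * a + p) * momγ j
  have MZ : ∀ k m, k + 2 ≤ m → u (P k * (φ * derivative (P m))) = 0 := by
    intro k m h
    have hp := pear (P k * P m)
    rw [derivative_mul] at hp
    rw [show φ * (derivative (P k) * P m + P k * derivative (P m))
        = P m * (φ * derivative (P k)) + P k * (φ * derivative (P m)) by ring] at hp
    rw [show ψ * (P k * P m) = P m * (ψ * P k) by ring] at hp
    rw [map_add, aux (k+1) _ m (hφd k) (by omega), aux (k+1) _ m (hψd k) (by omega),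
      zero_add, neg_zero] at hp
    exact hp
  have Struct : ∀ m, φ * derivative (P m)
      = C ((m:ℂ) * a) * P (m+1) + C (-((p * β m + q)/2)) * P m
        + C (-(((m:ℂ) - 1) * a + p) * γ m) * Qp m := by
    intro m
    have hz : ∀ k, u (P k * (φ * derivative (P m)
        - (C ((m:ℂ) * a) * P (m+1) + C (-((p * β m + q)/2)) * P m
          + C (-(((m:ℂ) - 1) * a + p) * γ m) * Qp m))) = 0 := by
      intro k
      have e : P k * (φ * derivative (P m)
          - (C ((m:ℂ) * a) * P (m+1) + C (-((p * β m + q)/2)) * P m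
            + C (-(((m:ℂ) - 1) * a + p) * γ m) * Qp m))
          = P k * (φ * derivative (P m)) - C ((m:ℂ) * a) * (P k * P (m+1))
            - C (-((p * β m + q)/2)) * (P k * P m)
            - C (-(((m:ℂ) - 1) * a + p) * γ m) * (P k * Qp m) := by ring
      rw [e, map_sub, map_sub, map_sub, hC, hC, hC]
      rcases lt_trichotomy k m with hlt | heq | hgt
      · rw [huP k (m+1) (by omega), huP k m (by omega)]
        rcases Nat.lt_or_ge (k+1) m with h2 | h2
        · rw [MZ k m (by omega), uQ' k m (by omega)]; ring
        · have hm : m = k + 1 := by omega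
          subst hm
          rw [MD k, hQs k]
          push_cast; ring
      · subst heq
        rw [ME k, huP k (k+1) (by omega), uQ k k le_rfl]; ring
      · rcases Nat.lt_or_ge (m+1) k with h2 | h2
        · rw [aux (m+1) _ k (hφd m) (by omega), huP k (m+1) (by omega),
            huP k m (by omega), uQ k m (by omega)]; ring
        · have hk : k = m + 1 := by omega
          subst hk
          rw [Mtop m, huP (m+1) m (by omega), uQ (m+1) m (by omega)]; ring
    have h0 := span _ hz
    have := sub_eq_zero.mp h0
    exact this
  have V5 : ∀ m, u (P (m+2) * (X * P m)) = 0 := by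
    intro m
    rw [hrec m]
    have e : P (m+2) * (P (m+1) + C (β m) * P m + C (γ m) * Qp m)
        = P (m+2) * P (m+1) + C (β m) * (P (m+2) * P m) + C (γ m) * (P (m+2) * Qp m) := by
      ring
    rw [e, map_add, map_add, hC, hC, huP (m+2) (m+1) (by omega), huP (m+2) m (by omega),
      uQ (m+2) m (by omega)]
    ring
  have V7 : ∀ m, u (Qp m * (X * P (m+1))) = 0 := by
    intro m
    cases m with
    | zero => rw [hQ0, zero_mul, map_zero]
    | succ k =>
      rw [hQs, hrec (k+2), hQs]
      have e : P k * (P (k+3) + C (β (k+2)) * P (k+2) + C (γ (k+2)) * P (k+1))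
          = P k * P (k+3) + C (β (k+2)) * (P k * P (k+2)) + C (γ (k+2)) * (P k * P (k+1)) := by
        ring
      rw [e, map_add, map_add, hC, hC, huP k (k+3) (by omega), huP k (k+2) (by omega),
        huP k (k+1) (by omega)]
      ring
  have XX : ∀ m, u ((X * P (m+1)) * (X * P m))
      = β (m+1) * u (P (m+1) * P (m+1)) + γ (m+1) * (β m * u (P m * P m)) := by
    intro m
    rw [hrec (m+1), hQs]
    have e : (P (m+2) + C (β (m+1)) * P (m+1) + C (γ (m+1)) * P m) * (X * P m)
        = P (m+2) * (X * P m) + C (β (m+1)) * (P (m+1) * (X * P m))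
          + C (γ (m+1)) * (P m * (X * P m)) := by ring
    rw [e, map_add, map_add, hC, hC, V5 m, L1 m, L2 m, zero_add]
  have T2 : ∀ m, u ((X * P m) * (φ * derivative (P (m+1))))
      = -((p * β (m+1) + q)/2) * u (P (m+1) * P (m+1))
        + -(((m:ℂ)+1) - 1) * a * γ (m+1) * (β m * u (P m * P m))
        - p * γ (m+1) * (β m * u (P m * P m)) := by
    intro m
    rw [Struct (m+1), hQs]
    have e : (X * P m) * (C (((m+1:ℕ):ℂ) * a) * P (m+2)
        + C (-((p * β (m+1) + q)/2)) * P (m+1)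
        + C (-((((m+1:ℕ):ℂ) - 1) * a + p) * γ (m+1)) * P m)
        = C (((m+1:ℕ):ℂ) * a) * (P (m+2) * (X * P m))
          + C (-((p * β (m+1) + q)/2)) * (P (m+1) * (X * P m))
          + C (-((((m+1:ℕ):ℂ) - 1) * a + p) * γ (m+1)) * (P m * (X * P m)) := by ring
    rw [e, map_add, map_add, hC, hC, hC, V5 m, L1 m, L2 m]
    push_cast
    ring
  have T3 : ∀ m, u ((X * P (m+1)) * (φ * derivative (P m)))
      = (m:ℂ) * a * (β (m+1) * u (P (m+1) * P (m+1)))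
        + -((p * β m + q)/2) * (γ (m+1) * u (P m * P m)) := by
    intro m
    rw [Struct m]
    have e : (X * P (m+1)) * (C ((m:ℂ) * a) * P (m+1) + C (-((p * β m + q)/2)) * P m
        + C (-(((m:ℂ) - 1) * a + p) * γ m) * Qp m)
        = C ((m:ℂ) * a) * (P (m+1) * (X * P (m+1)))
          + C (-((p * β m + q)/2)) * (P m * (X * P (m+1)))
          + C (-(((m:ℂ) - 1) * a + p) * γ m) * (Qp m * (X * P (m+1))) := by ring
    rw [e, map_add, map_add, hC, hC, hC, L2 (m+1), L3 m, V7 m]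
    ring
  have hKey : ∀ m : ℕ, -(((m:ℂ)+1) * a * β (m+1)) + -((p * β (m+1) + q)/2)
      + -((p * β m + q)/2) + (((m:ℂ)-1) * a + p) * β m = b - q := by
    intro m
    have hγ : γ (m+1) ≠ 0 := by
      intro h
      exact hu2 (m+1) (by rw [momγ m, h, zero_mul])
    have hp := pear (X * (P (m+1) * P m))
    rw [derivative_mul, derivative_mul, derivative_X] at hp
    have e1 : φ * (1 * (P (m+1) * P m)
        + X * (derivative (P (m+1)) * P m + P (m+1) * derivative (P m)))
        = C a * ((X * P (m+1)) * (X * P m)) + C b * (P (m+1) * (X * P m))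
          + C c * (P (m+1) * P m)
          + (X * P m) * (φ * derivative (P (m+1)))
          + (X * P (m+1)) * (φ * derivative (P m)) := by
      rw [hφ]; ring
    have e2 : ψ * (X * (P (m+1) * P m))
        = C p * ((X * P (m+1)) * (X * P m)) + C q * (P (m+1) * (X * P m)) := by
      rw [hψ]; ring
    rw [e1, e2, map_add, map_add, map_add, map_add, map_add, hC, hC, hC, hC, hC,
      XX m, L1 m, huP (m+1) m (by omega), T2 m, T3 m, momγ m] at hp
    apply mul_right_cancel₀ (mul_ne_zero hγ (hu2 m))
    linear_combination -hp
  intro n hn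
  obtain ⟨m, rfl⟩ : ∃ m, n = m + 1 := ⟨n - 1, by omega⟩
  simp only [Nat.add_sub_cancel]
  have hdφ : derivative φ = C (2*a) * X + C b := by
    rw [hφ]
    simp only [derivative_add, derivative_mul, derivative_C, derivative_X_pow,
      derivative_X, derivative_one]
    rw [C_mul]
    push_cast
    ring
  have S1 := Struct (m+1)
  rw [hQs] at S1
  have hQm : C (-(((m:ℂ) - 1) * a + p) * γ m) * Qp m
      = C (-(((m:ℂ) - 1) * a + p)) * (X * P m - P (m+1) - C (β m) * P m) := by
    rw [C_mul]
    have h2 : C (γ m) * Qp m = X * P m - P (m+1) - C (β m) * P m := by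
      linear_combination -hrec m
    linear_combination C (-(((m:ℂ) - 1) * a + p)) * h2
  have S0 := Struct m
  rw [hQm] at S0
  have hR := hPrec m
  have hKeyX := congrArg C (hKey m)
  rw [hψ, hdφ, derivative_mul]
  push_cast at S1 hKeyX ⊢
  simp only [map_add, map_sub, map_mul, map_neg, map_natCast, map_ofNat, map_one] at S1 S0 hR hKeyX ⊢
  linear_combination (P m) * S1 + (P (m+1)) * S0
    + (((m:ℂ[X]))+1) * C a * (P m) * hR + (P (m+1) * P m) * hKeyX
end
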